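/- arXiv:gr-qc/0410070 — 6 statements merged into one kernel-verified Lean document; each statement's English description precedes it below -/
import Mathlib

section
/- Let g be an invertible symmetric real N×N matrix and Q a symmetric real N×N matrix with Q g⁻¹ Q = 0 (the zero matrix). Then there exist integers p, q ≥ 0 and vectors k_1,…,k_{p+q} ∈ ℝ^N which are mutually orthogonal null covectors with respect to g, i.e. k_λᵀ g⁻¹ k_μ = 0 for all 1 ≤ λ, μ ≤ p+q, such that Q = Σ_{λ=1}^{p} k_λ k_λᵀ − Σ_{λ=p+1}^{p+q} k_λ k_λᵀ. -/
open Matrix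

/-!
Diagonalise `Q = Σ_j λ_j v_j v_jᵀ` with a Euclidean orthonormal eigenbasis. For an eigenvector
`v` with `λ ≠ 0`, `λ Q g⁻¹ v = Q g⁻¹ Q v = 0`, and symmetry of `Q` then gives
`λ_i (v_iᵀ g⁻¹ v_j) = v_iᵀ Q g⁻¹ v_j = 0`: the eigenvectors with nonzero eigenvalue are mutually
orthogonal null covectors for `g⁻¹`. Taking `k = √(λ⁺) v` and `k = √(λ⁻) v` for each eigenvector
yields the signed sum.
-/

namespace Matrix

variable {n : Type*} [Fintype n]

theorem IsHermitian.eq_sum_smul_vecMulVec {𝕜 : Type*} [RCLike 𝕜] [DecidableEq n]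
    {A : Matrix n n 𝕜} (hA : A.IsHermitian) :
    A = ∑ j, hA.eigenvalues j •
      vecMulVec ⇑(hA.eigenvectorBasis j) (star ⇑(hA.eigenvectorBasis j)) := by
  conv_lhs => rw [hA.spectral_theorem]
  ext a b
  simp [Unitary.conjStarAlgAut_apply, mul_apply, diagonal, vecMulVec_apply, Matrix.sum_apply,
    RCLike.real_smul_eq_coe_mul, mul_comm, mul_left_comm, mul_assoc]

section Field

variable {K : Type*} [Field K] {Q M : Matrix n n K} {v w : n → K} {a b : K}

theorem mulVec_mulVec_eq_zero_of_mulVec_eq_smul (hQMQ : Q * M * Q = 0)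
    (hw : Q *ᵥ w = b • w) (hb : b ≠ 0) : Q *ᵥ (M *ᵥ w) = 0 := by
  have : b • Q *ᵥ (M *ᵥ w) = 0 := by
    rw [← mulVec_smul, ← mulVec_smul, ← hw, mulVec_mulVec, mulVec_mulVec, hQMQ, zero_mulVec]
  exact (smul_eq_zero.mp this).resolve_left hb

theorem dotProduct_mulVec_eq_zero_of_mulVec_eq_smul (hQ : Q.IsSymm) (hQMQ : Q * M * Q = 0)
    (hv : Q *ᵥ v = a • v) (ha : a ≠ 0) (hw : Q *ᵥ w = b • w) (hb : b ≠ 0) :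
    v ⬝ᵥ M *ᵥ w = 0 := by
  have : a * (v ⬝ᵥ M *ᵥ w) = 0 :=
    calc a * (v ⬝ᵥ M *ᵥ w) = Q *ᵥ v ⬝ᵥ M *ᵥ w := by rw [hv, smul_dotProduct, smul_eq_mul]
      _ = v ⬝ᵥ Q *ᵥ (M *ᵥ w) := by rw [← vecMul_transpose, hQ.eq, ← dotProduct_mulVec]
      _ = 0 := by rw [mulVec_mulVec_eq_zero_of_mulVec_eq_smul hQMQ hw hb, dotProduct_zero]
  exact (mul_eq_zero.mp this).resolve_left ha

end Field

theorem exists_signed_sum_vecMulVec {m : ℕ} (M : Matrix n n ℝ) (c : Fin m → ℝ)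
    (v : Fin m → n → ℝ) (hv : ∀ i j, c i ≠ 0 → c j ≠ 0 → v i ⬝ᵥ M *ᵥ v j = 0) :
    ∃ (p q : ℕ) (k : Fin (p + q) → n → ℝ),
      (∀ l l', k l ⬝ᵥ M *ᵥ k l' = 0) ∧
      ∑ j, c j • vecMulVec (v j) (v j) =
        ∑ l : Fin (p + q), (if (l : ℕ) < p then (1 : ℝ) else -1) • vecMulVec (k l) (k l) := by
  let idx : Fin (m + m) → Fin m := Fin.append id id
  let s : Fin (m + m) → ℝ := Fin.append (fun j ↦ √(c j)⁺) (fun j ↦ √(c j)⁻)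
  have hs : ∀ l, s l ≠ 0 → c (idx l) ≠ 0 := by
    refine Fin.addCases ?_ ?_ <;> intro j hj hc <;>
      simp only [s, idx, Fin.append_left, Fin.append_right, id] at hj hc <;> simp [hc] at hj
  refine ⟨m, m, fun l ↦ s l • v (idx l), fun l l' ↦ ?_, ?_⟩
  · by_cases hl : s l = 0
    · simp [hl]
    by_cases hl' : s l' = 0
    · simp [hl']
    simp [mulVec_smul, hv _ _ (hs l hl) (hs l' hl')]
  · rw [Fin.sum_univ_add, ← Finset.sum_add_distrib]
    refine Finset.sum_congr rfl fun j _ ↦ ?_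
    simp only [smul_vecMulVec, vecMulVec_smul, smul_smul, s, idx, Fin.append_left,
      Fin.append_right, Fin.val_castAdd, Fin.val_natAdd, j.isLt, if_true, id,
      Real.mul_self_sqrt (posPart_nonneg _), Real.mul_self_sqrt (negPart_nonneg _)]
    rw [if_neg (by omega), ← add_smul]
    congr 1
    linarith [posPart_sub_negPart (c j)]

end Matrix

theorem vsi_q_squared_zero_general (N : ℕ) (g Q : Matrix (Fin N) (Fin N) ℝ)
    (hQsymm : Q.IsSymm)
    (hQ2 : Q * g⁻¹ * Q = 0) :
    ∃ (p q : ℕ) (k : Fin (p + q) → (Fin N → ℝ)),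
      (∀ l m : Fin (p + q), k l ⬝ᵥ g⁻¹ *ᵥ k m = 0) ∧
      Q = (∑ l : Fin (p + q),
            (if (l : ℕ) < p then (1 : ℝ) else -1) • vecMulVec (k l) (k l)) := by
  have hQ : Q.IsHermitian := isHermitian_iff_isSymm.mpr hQsymm
  have hspectral : Q = ∑ j, hQ.eigenvalues j •
      vecMulVec ⇑(hQ.eigenvectorBasis j) ⇑(hQ.eigenvectorBasis j) := by
    simpa only [star_trivial] using hQ.eq_sum_smul_vecMulVec
  obtain ⟨p, q, k, hnull, hsum⟩ := exists_signed_sum_vecMulVec g⁻¹ hQ.eigenvalues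
    (fun j ↦ ⇑(hQ.eigenvectorBasis j)) fun i j hi hj ↦
      dotProduct_mulVec_eq_zero_of_mulVec_eq_smul hQsymm hQ2
        (hQ.mulVec_eigenvectorBasis i) hi (hQ.mulVec_eigenvectorBasis j) hj
  exact ⟨p, q, k, hnull, hspectral.trans hsum⟩

/-- **Corollary B.3** (`cor:vsiq2`): if `g` is an invertible symmetric real `N×N` matrix
and `Q` a symmetric matrix with `Q g⁻¹ Q = 0` (the square of `Q` with one index raised
vanishes), then `Q = Σ_{λ<p} k_λ k_λᵀ − Σ_{p≤λ<p+q} k_λ k_λᵀ` for a collection of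
mutually orthogonal null covectors `k_λ`, i.e. `k_λᵀ g⁻¹ k_μ = 0` for all `λ, μ`. -/
theorem vsi_q_squared_zero (N : ℕ) (g Q : Matrix (Fin N) (Fin N) ℝ)
    (hgsymm : g.IsSymm) (hginv : IsUnit g.det) (hQsymm : Q.IsSymm)
    (hQ2 : Q * g⁻¹ * Q = 0) :
    ∃ (p q : ℕ) (k : Fin (p + q) → (Fin N → ℝ)),
      (∀ l m : Fin (p + q), k l ⬝ᵥ g⁻¹ *ᵥ k m = 0) ∧
      Q = (∑ l : Fin (p + q),
            (if (l : ℕ) < p then (1 : ℝ) else -1) • vecMulVec (k l) (k l)) :=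
  vsi_q_squared_zero_general N g Q hQsymm hQ2
end

section
/- Let g be a symmetric real N×N matrix of Lorentz signature (N−1 positive and 1 negative square) and Q a symmetric real N×N matrix such that g⁻¹Q is nilpotent. Then exactly one of the following holds: (i) Q = 0; (ii) there is a nonzero vector ℓ ∈ ℝ^N with ℓᵀ g⁻¹ ℓ = 0 such that Q = ℓℓᵀ or Q = −ℓℓᵀ; (iii) there are vectors ℓ, m ∈ ℝ^N with ℓ ≠ 0, ℓᵀ g⁻¹ ℓ = 0, mᵀ g⁻¹ m = 1, ℓᵀ g⁻¹ m = 0, such that Q = (ℓmᵀ + mℓᵀ)/2. -/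
/-!
Write `h = g⁻¹`. Being congruent to `diag(1,…,1,−1)`, it makes any two `h`-orthogonal covectors
of nonpositive square collinear (a plane on which the form is nonpositive would meet the
spacelike hyperplane `t = 0`).

`M = Q h` is `h`-self-adjoint, so if `M` is nilpotent of index `k ≥ 4` the image of `M ^ (k - 2)`
is totally null, hence a line on which `M` acts nilpotently, i.e. trivially: so `Q h Q h Q = 0`.
A symmetric `S` with `S h S = 0` has pairwise orthogonal null columns, hence `S = ±ℓℓᵀ`.
If `Q h Q = 0` this applies to `Q`. Otherwise it applies to `S = Q h Q`, and `S h Q = 0` gives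
`Q h ℓ = 0`. For `ℓ ⬝ u = 1` the covector `p = Q u` is orthogonal to `ℓ` with square `±1`; the
sign is `+` because `ℓ⊥` contains no timelike covector, and then `Q - ℓpᵀ - pℓᵀ` is again such an
`S`, orthogonal to `ℓ`, hence a multiple of `ℓℓᵀ`. The cases are told apart by `Q = 0` and
`Q h Q = 0`, the latter failing in case (iii) where `Q h Q = ¼ ℓℓᵀ`.
-/

open Matrix

/-- The standard Minkowski diagonal matrix `diag(1,…,1,−1)` (N−1 positive squares,
one negative square). -/
def minkDiag (N : ℕ) : Matrix (Fin N) (Fin N) ℝ :=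
  Matrix.diagonal (fun i => if (i : ℕ) + 1 < N then 1 else -1)

/-- The symmetrized outer product of two column vectors: `x ⊙ y = (x yᵀ + y xᵀ)/2`. -/
noncomputable def symOuter {N : ℕ} (x y : Fin N → ℝ) : Matrix (Fin N) (Fin N) ℝ :=
  (1 / 2 : ℝ) • (vecMulVec x y + vecMulVec y x)

variable {n : Type*}

section Bilinear

variable {R : Type*} [Fintype n] [CommSemiring R]

theorem Matrix.IsSymm.dotProduct_mulVec_comm {h : Matrix n n R} (hh : h.IsSymm) (v w : n → R) :
    v ⬝ᵥ h *ᵥ w = w ⬝ᵥ h *ᵥ v := by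
  rw [dotProduct_mulVec, ← mulVec_transpose, hh.eq, dotProduct_comm]

theorem Matrix.dotProduct_transpose_mul_mul_mulVec (A h B : Matrix n n R) (v w : n → R) :
    v ⬝ᵥ (Aᵀ * h * B) *ᵥ w = (A *ᵥ v) ⬝ᵥ h *ᵥ (B *ᵥ w) := by
  rw [← mulVec_mulVec, ← mulVec_mulVec, dotProduct_mulVec, vecMul_transpose]

theorem Matrix.vecMulVec_mul_mul_vecMulVec (a b c d : n → R) (h : Matrix n n R) :
    vecMulVec a b * h * vecMulVec c d = (b ⬝ᵥ h *ᵥ c) • vecMulVec a d := by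
  rw [vecMulVec_mul, vecMulVec_mul_vecMulVec, ← dotProduct_mulVec, vecMulVec_smul]

end Bilinear

theorem mul_mul_transpose_mul_eq_one {R : Type*} [CommRing R] [Fintype n] [DecidableEq n]
    {g P η : Matrix n n R} (hP : IsUnit P.det) (hη : η * η = 1) (hPg : Pᵀ * g * P = η) :
    P * η * Pᵀ * g = 1 := calc
  P * η * Pᵀ * g = P * η * (Pᵀ * g * P) * P⁻¹ := by
    simp only [Matrix.mul_assoc, mul_nonsing_inv P hP, Matrix.mul_one]
  _ = 1 := by rw [hPg, Matrix.mul_assoc P η η, hη, Matrix.mul_one, mul_nonsing_inv P hP]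

theorem smul_vecMulVec_self_eq_or_eq_neg (β : ℝ) (c : n → ℝ) :
    β • vecMulVec c c = vecMulVec (√|β| • c) (√|β| • c) ∨
      β • vecMulVec c c = -vecMulVec (√|β| • c) (√|β| • c) := by
  rw [smul_vecMulVec, vecMulVec_smul, smul_smul, Real.mul_self_sqrt (abs_nonneg β)]
  rcases le_total 0 β with hβ | hβ
  · exact Or.inl (by rw [abs_of_nonneg hβ])
  · exact Or.inr (by rw [abs_of_nonpos hβ, neg_smul, neg_neg])

variable [Fintype n]

/-- For a nondegenerate form this says that its negative index is at most one. -/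
def NegIndexLeOne (h : Matrix n n ℝ) : Prop :=
  ∀ v w : n → ℝ, v ⬝ᵥ h *ᵥ v ≤ 0 → w ⬝ᵥ h *ᵥ w ≤ 0 → v ⬝ᵥ h *ᵥ w = 0 →
    v = 0 ∨ ∃ c : ℝ, w = c • v

theorem NegIndexLeOne.transpose_mul_mul [DecidableEq n] {h A : Matrix n n ℝ}
    (hh : NegIndexLeOne h) (hA : IsUnit A.det) : NegIndexLeOne (Aᵀ * h * A) := by
  have hinj : Function.Injective A.mulVec :=
    mulVec_injective_iff_isUnit.2 ((isUnit_iff_isUnit_det A).2 hA)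
  intro v w hv hw hvw
  simp only [dotProduct_transpose_mul_mul_mulVec] at hv hw hvw
  rcases hh _ _ hv hw hvw with h0 | ⟨c, hc⟩
  · exact Or.inl (hinj (by rw [h0, mulVec_zero]))
  · exact Or.inr ⟨c, hinj (by rw [hc, mulVec_smul])⟩

theorem NegIndexLeOne.eq_zero_of_dotProduct_eq_zero {h : Matrix n n ℝ} (hh : NegIndexLeOne h)
    {p v : n → ℝ} (hp : p ⬝ᵥ h *ᵥ p < 0) (hpv : p ⬝ᵥ h *ᵥ v = 0) (hv : v ⬝ᵥ h *ᵥ v ≤ 0) :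
    v = 0 := by
  rcases hh p v hp.le hv hpv with rfl | ⟨c, rfl⟩
  · simp at hp
  · rw [mulVec_smul, dotProduct_smul, smul_eq_mul, mul_eq_zero] at hpv
    rcases hpv with rfl | h0
    · exact zero_smul ℝ p
    · exact absurd h0 hp.ne

theorem isSymm_minkDiag (N : ℕ) : (minkDiag N).IsSymm :=
  isSymm_diagonal _

theorem minkDiag_mul_self (N : ℕ) : minkDiag N * minkDiag N = 1 := by
  rw [minkDiag, diagonal_mul_diagonal, ← diagonal_one]
  congr 1
  ext i
  split_ifs <;> norm_num

theorem minkDiag_mulVec_of_last_eq_zero {n : ℕ} {z : Fin (n + 1) → ℝ}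
    (hz : z (Fin.last n) = 0) : minkDiag (n + 1) *ᵥ z = z := by
  ext i
  rw [minkDiag, mulVec_diagonal]
  split_ifs with hi
  · exact one_mul _
  · rw [show i = Fin.last n from Fin.ext (by simp; omega), hz, mul_zero]

theorem eq_zero_of_minkDiag_self_nonpos {n : ℕ} {z : Fin (n + 1) → ℝ}
    (hz : z (Fin.last n) = 0) (hzz : z ⬝ᵥ minkDiag (n + 1) *ᵥ z ≤ 0) : z = 0 := by
  rw [minkDiag_mulVec_of_last_eq_zero hz] at hzz
  exact dotProduct_self_eq_zero.1 (hzz.antisymm (Fintype.sum_nonneg fun i => mul_self_nonneg (z i)))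

theorem negIndexLeOne_minkDiag (N : ℕ) : NegIndexLeOne (minkDiag N) := by
  intro v w hv hw hvw
  obtain _ | n := N
  · exact Or.inl (Subsingleton.elim _ _)
  set t := v (Fin.last n)
  set s := w (Fin.last n)
  -- `s • v - t • w` is purely spatial, with square `s² v² + t² w² ≤ 0`.
  have hsv : s • v = t • w := by
    refine sub_eq_zero.1 (eq_zero_of_minkDiag_self_nonpos (by simp [t, s, mul_comm]) ?_)
    have hwv : w ⬝ᵥ minkDiag (n + 1) *ᵥ v = 0 := by
      rwa [(isSymm_minkDiag _).dotProduct_mulVec_comm]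
    simp only [mulVec_sub, mulVec_smul, dotProduct_sub, sub_dotProduct, dotProduct_smul,
      smul_dotProduct, smul_eq_mul, hvw, hwv]
    nlinarith [mul_nonpos_of_nonneg_of_nonpos (mul_self_nonneg s) hv,
      mul_nonpos_of_nonneg_of_nonpos (mul_self_nonneg t) hw]
  by_cases ht : t = 0
  · exact Or.inl (eq_zero_of_minkDiag_self_nonpos ht hv)
  · refine Or.inr ⟨s / t, ?_⟩
    rw [div_eq_inv_mul, mul_smul, hsv, inv_smul_smul₀ ht]

theorem Matrix.IsSymm.exists_eq_smul_vecMulVec [DecidableEq n] {h S : Matrix n n ℝ}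
    (hind : NegIndexLeOne h) (hS : S.IsSymm) (hSS : S * h * S = 0) :
    ∃ c : n → ℝ, c ⬝ᵥ h *ᵥ c = 0 ∧ ∃ β : ℝ, S = β • vecMulVec c c := by
  by_cases hS0 : S = 0
  · exact ⟨0, by simp, 0, by simp [hS0]⟩
  have hcol : ∀ i j, S.col i ⬝ᵥ h *ᵥ S.col j = 0 := fun i j => by
    rw [← mulVec_single_one, ← mulVec_single_one, ← dotProduct_transpose_mul_mul_mulVec, hS.eq,
      hSS, zero_mulVec, dotProduct_zero]
  obtain ⟨i₀, j₀, hij⟩ : ∃ i j, S i j ≠ 0 := by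
    by_contra! h0
    exact hS0 (Matrix.ext h0)
  choose a ha using fun j =>
    (hind _ _ (hcol j₀ j₀).le (hcol j j).le (hcol j₀ j)).resolve_left
      (fun h0 => hij (congrFun h0 i₀))
  have hSa : ∀ i j, S i j = a j * S i j₀ := fun i j => congrFun (ha j) i
  refine ⟨S.col j₀, hcol j₀ j₀, a i₀ / S i₀ j₀, Matrix.ext fun i j => ?_⟩
  have hsymm := hS.apply i₀ j
  rw [hSa i₀ j, hSa j i₀] at hsymm
  simp only [smul_apply, vecMulVec_apply, col_apply, smul_eq_mul, hSa i j]
  rw [div_mul_eq_mul_div, eq_div_iff hij]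
  linear_combination (-S i j₀) * hsymm

def IsSignedNullSquare (h Q : Matrix n n ℝ) : Prop :=
  ∃ l : n → ℝ, l ≠ 0 ∧ l ⬝ᵥ h *ᵥ l = 0 ∧ (Q = vecMulVec l l ∨ Q = -vecMulVec l l)

theorem Matrix.IsSymm.isSignedNullSquare [DecidableEq n] {h S : Matrix n n ℝ}
    (hind : NegIndexLeOne h) (hS : S.IsSymm) (hS0 : S ≠ 0) (hSS : S * h * S = 0) :
    IsSignedNullSquare h S := by
  obtain ⟨c, hc, β, rfl⟩ := hS.exists_eq_smul_vecMulVec hind hSS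
  have hβ : β ≠ 0 := by rintro rfl; simp at hS0
  have hc0 : c ≠ 0 := by rintro rfl; simp at hS0
  refine ⟨√|β| • c, smul_ne_zero (Real.sqrt_ne_zero'.2 (abs_pos.2 hβ)) hc0, ?_,
    smul_vecMulVec_self_eq_or_eq_neg β c⟩
  simp [mulVec_smul, hc]

theorem IsSignedNullSquare.ne_zero {h Q : Matrix n n ℝ} (hQ : IsSignedNullSquare h Q) : Q ≠ 0 := by
  obtain ⟨l, hl, -, rfl | rfl⟩ := hQ <;> simp [hl]

theorem IsSignedNullSquare.mul_mul_self_eq_zero {h Q : Matrix n n ℝ}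
    (hQ : IsSignedNullSquare h Q) : Q * h * Q = 0 := by
  obtain ⟨l, -, hll, rfl | rfl⟩ := hQ <;> simp [vecMulVec_mul_mul_vecMulVec, hll]

theorem Matrix.IsSymm.eq_smul_vecMulVec_of_mulVec_eq_zero [DecidableEq n] {h S : Matrix n n ℝ}
    (hS : S.IsSymm) (hind : NegIndexLeOne h) (hh : h.IsSymm) (hSS : S * h * S = 0)
    {ℓ : n → ℝ} (hℓ : ℓ ≠ 0) (hℓℓ : ℓ ⬝ᵥ h *ᵥ ℓ = 0) (hSℓ : S *ᵥ (h *ᵥ ℓ) = 0) :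
    ∃ β : ℝ, S = β • vecMulVec ℓ ℓ := by
  obtain ⟨c, hc, β, rfl⟩ := hS.exists_eq_smul_vecMulVec hind hSS
  rw [smul_mulVec, vecMulVec_mulVec, op_smul_eq_smul, smul_smul, smul_eq_zero,
    mul_eq_zero] at hSℓ
  rcases hSℓ with (rfl | hcℓ) | rfl
  · exact ⟨0, by simp⟩
  · rw [hh.dotProduct_mulVec_comm] at hcℓ
    obtain ⟨t, rfl⟩ := (hind ℓ c hℓℓ.le hc.le hcℓ).resolve_left hℓ
    exact ⟨β * t * t, by rw [smul_vecMulVec, vecMulVec_smul, smul_smul, smul_smul, mul_assoc]⟩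
  · exact ⟨0, by simp⟩

section Index

variable [DecidableEq n] {h Q : Matrix n n ℝ}

theorem pow_mulVec_dotProduct_mulVec_pow_mulVec (hh : h.IsSymm) (hQ : Q.IsSymm) (a b : ℕ)
    (x y : n → ℝ) :
    ((Q * h) ^ a *ᵥ x) ⬝ᵥ h *ᵥ ((Q * h) ^ b *ᵥ y) = x ⬝ᵥ h *ᵥ ((Q * h) ^ (a + b) *ᵥ y) := by
  rw [← dotProduct_transpose_mul_mul_mulVec, transpose_pow, transpose_mul, hh.eq, hQ.eq,
    mul_pow_mul, Matrix.mul_assoc, ← pow_add, ← mulVec_mulVec]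

theorem pow_mulVec_of_mulVec_eq_smul {M : Matrix n n ℝ} {u : n → ℝ} {c : ℝ} (hu : M *ᵥ u = c • u)
    (k : ℕ) : M ^ k *ᵥ u = c ^ k • u := by
  induction k with
  | zero => simp
  | succ k ih => rw [pow_succ', ← mulVec_mulVec, ih, mulVec_smul, hu, smul_smul, pow_succ]

theorem pow_add_three_eq_zero (hind : NegIndexLeOne h) (hh : h.IsSymm) (hQ : Q.IsSymm) {k : ℕ}
    (hk : (Q * h) ^ (k + 4) = 0) : (Q * h) ^ (k + 3) = 0 := by
  refine ext_of_mulVec_single fun i => ?_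
  -- `Q h` is `h`-self-adjoint and `(Q h) ^ (2k + 4) = 0`, so the image of `(Q h) ^ (k + 2)` is
  -- totally null.
  have hnull : ∀ a b, k + 2 ≤ a → k + 2 ≤ b →
      ((Q * h) ^ a *ᵥ Pi.single i 1) ⬝ᵥ h *ᵥ ((Q * h) ^ b *ᵥ Pi.single i 1) = 0 := by
    intro a b ha hb
    rw [pow_mulVec_dotProduct_mulVec_pow_mulVec hh hQ, pow_eq_zero_of_le (by omega) hk, zero_mulVec,
      mulVec_zero, dotProduct_zero]
  set u := (Q * h) ^ (k + 2) *ᵥ Pi.single i 1 with hu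
  rw [zero_mulVec]
  rcases hind u _ (hnull _ _ le_rfl le_rfl).le (hnull (k + 3) (k + 3) (by omega) (by omega)).le
    (hnull _ (k + 3) le_rfl (by omega)) with hu0 | ⟨c, hc⟩
  · rw [pow_succ', ← mulVec_mulVec, ← hu, hu0, mulVec_zero]
  · have hck : c ^ (k + 4) • u = 0 := by
      rw [← pow_mulVec_of_mulVec_eq_smul (by rwa [hu, mulVec_mulVec, ← pow_succ']), hk,
        zero_mulVec]
    rw [hc]
    rcases smul_eq_zero.1 hck with hc0 | hu0
    · rw [pow_eq_zero_iff (by omega) |>.1 hc0, zero_smul]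
    · rw [hu0, smul_zero]

theorem pow_three_eq_zero_of_isNilpotent (hind : NegIndexLeOne h) (hh : h.IsSymm)
    (hQ : Q.IsSymm) (hnil : IsNilpotent (Q * h)) : (Q * h) ^ 3 = 0 := by
  obtain ⟨k, hk⟩ := hnil
  suffices ∀ j, (Q * h) ^ (j + 3) = 0 → (Q * h) ^ 3 = 0 from
    this k (pow_eq_zero_of_le (by omega) hk)
  intro j
  induction j with
  | zero => exact id
  | succ j ih => exact fun hj => ih (pow_add_three_eq_zero hind hh hQ hj)

end Index

theorem eq_add_smul_vecMulVec_of_mul_mul_self_eq [DecidableEq n] {h Q : Matrix n n ℝ}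
    (hind : NegIndexLeOne h) (hh : h.IsSymm) (hQ : Q.IsSymm) {ℓ p : n → ℝ} (hℓ : ℓ ≠ 0)
    (hℓℓ : ℓ ⬝ᵥ h *ᵥ ℓ = 0) (hpp : p ⬝ᵥ h *ᵥ p = 1) (hℓp : ℓ ⬝ᵥ h *ᵥ p = 0)
    (hQQ : Q * h * Q = vecMulVec ℓ ℓ) (hQℓ : Q *ᵥ (h *ᵥ ℓ) = 0) (hQp : Q *ᵥ (h *ᵥ p) = ℓ) :
    ∃ β : ℝ, Q = vecMulVec ℓ p + vecMulVec p ℓ + β • vecMulVec ℓ ℓ := by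
  have hpℓ : p ⬝ᵥ h *ᵥ ℓ = 0 := by rwa [hh.dotProduct_mulVec_comm]
  set T := vecMulVec ℓ p + vecMulVec p ℓ
  have hQT : Q * h * T = vecMulVec ℓ ℓ := by
    simp only [T, mul_add, mul_vecMulVec, ← mulVec_mulVec, hQℓ, hQp, zero_vecMulVec, zero_add]
  have hTQ : T * h * Q = vecMulVec ℓ ℓ := by
    simp only [T, add_mul, vecMulVec_mul, ← mulVec_transpose, hh.eq, hQ.eq, hQℓ, hQp,
      vecMulVec_zero, add_zero]
  have hTT : T * h * T = vecMulVec ℓ ℓ := by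
    simp only [T, add_mul, mul_add, vecMulVec_mul_mul_vecMulVec, hℓℓ, hpp, hℓp, hpℓ, zero_smul,
      one_smul, add_zero, zero_add]
  set R := Q - T
  have hR : R.IsSymm := hQ.sub <| by
    simp only [T, IsSymm, transpose_add, transpose_vecMulVec, add_comm]
  have hRR : R * h * R = 0 := by
    have : R * h * R = Q * h * Q - Q * h * T - T * h * Q + T * h * T := by
      simp only [R]
      noncomm_ring
    rw [this, hQQ, hQT, hTQ, hTT]
    abel
  have hRℓ : R *ᵥ (h *ᵥ ℓ) = 0 := by
    simp only [R, T, sub_mulVec, add_mulVec, vecMulVec_mulVec, hQℓ, hpℓ, hℓℓ, MulOpposite.op_zero,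
      zero_smul, add_zero, sub_zero]
  obtain ⟨β, hβ⟩ := hR.eq_smul_vecMulVec_of_mulVec_eq_zero hind hh hRR hℓ hℓℓ hRℓ
  exact ⟨β, by rw [← hβ, add_sub_cancel]⟩

def IsNullSymOuter {N : ℕ} (h Q : Matrix (Fin N) (Fin N) ℝ) : Prop :=
  ∃ l m : Fin N → ℝ, l ≠ 0 ∧ l ⬝ᵥ h *ᵥ l = 0 ∧ m ⬝ᵥ h *ᵥ m = 1 ∧ l ⬝ᵥ h *ᵥ m = 0 ∧
    Q = symOuter l m

theorem IsNullSymOuter.mul_mul_self_ne_zero {N : ℕ} {h Q : Matrix (Fin N) (Fin N) ℝ}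
    (hh : h.IsSymm) (hQ : IsNullSymOuter h Q) : Q * h * Q ≠ 0 := by
  obtain ⟨l, m, hl, hll, hmm, hlm, rfl⟩ := hQ
  have hml : m ⬝ᵥ h *ᵥ l = 0 := by rwa [hh.dotProduct_mulVec_comm]
  have : symOuter l m * h * symOuter l m = (1 / 4 : ℝ) • vecMulVec l l := by
    simp only [symOuter, smul_mul_assoc, mul_smul_comm, add_mul, mul_add,
      vecMulVec_mul_mul_vecMulVec, hll, hmm, hlm, hml, zero_smul, one_smul, add_zero, zero_add,
      smul_zero]
    rw [smul_smul]
    norm_num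
  rw [this]
  simp [hl]

theorem isNullSymOuter_of_eq_add_smul {N : ℕ} {h Q : Matrix (Fin N) (Fin N) ℝ} (hh : h.IsSymm)
    {ℓ p : Fin N → ℝ} {β : ℝ} (hℓ : ℓ ≠ 0) (hℓℓ : ℓ ⬝ᵥ h *ᵥ ℓ = 0) (hpp : p ⬝ᵥ h *ᵥ p = 1)
    (hℓp : ℓ ⬝ᵥ h *ᵥ p = 0) (hQ : Q = vecMulVec ℓ p + vecMulVec p ℓ + β • vecMulVec ℓ ℓ) :
    IsNullSymOuter h Q := by
  have hpℓ : p ⬝ᵥ h *ᵥ ℓ = 0 := by rwa [hh.dotProduct_mulVec_comm]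
  have hQ' : Q = symOuter ((2 : ℝ) • ℓ) (p + (β / 2) • ℓ) := by
    rw [hQ, symOuter]
    ext i j
    simp only [Matrix.smul_apply, Matrix.add_apply, vecMulVec_apply, Pi.add_apply,
      Pi.smul_apply, smul_eq_mul]
    ring
  refine ⟨_, _, smul_ne_zero two_ne_zero hℓ, ?_, ?_, ?_, hQ'⟩ <;>
    simp only [mulVec_add, mulVec_smul, dotProduct_add, add_dotProduct, dotProduct_smul,
      smul_dotProduct, smul_eq_mul, hℓℓ, hpp, hℓp, hpℓ] <;>
    ring

theorem isNullSymOuter_of_mul_mul_self_ne_zero {N : ℕ} {h Q : Matrix (Fin N) (Fin N) ℝ}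
    (hind : NegIndexLeOne h) (hh : h.IsSymm) (hQ : Q.IsSymm) (hQ3 : Q * h * Q * h * Q = 0)
    (hS : Q * h * Q ≠ 0) : IsNullSymOuter h Q := by
  have hSsymm : (Q * h * Q).IsSymm := by
    simp only [IsSymm, transpose_mul, hh.eq, hQ.eq, Matrix.mul_assoc]
  obtain ⟨ℓ, hℓ, hℓℓ, hSℓ⟩ := hSsymm.isSignedNullSquare hind hS <| by
    rw [show Q * h * Q * h * (Q * h * Q) = Q * h * Q * h * Q * h * Q by
      simp only [Matrix.mul_assoc], hQ3, Matrix.zero_mul, Matrix.zero_mul]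
  have hQℓ : Q *ᵥ (h *ᵥ ℓ) = 0 := by
    have h0 : vecMulVec ℓ ℓ * h * Q = 0 := by
      rcases hSℓ with hSℓ | hSℓ
      · rw [← hSℓ, hQ3]
      · rw [← neg_eq_zero, ← Matrix.neg_mul, ← Matrix.neg_mul, ← hSℓ, hQ3]
    simpa [vecMulVec_mul, ← mulVec_transpose, hh.eq, hQ.eq, hℓ] using h0
  obtain ⟨u, hu⟩ : ∃ u, ℓ ⬝ᵥ u = 1 := ⟨(ℓ ⬝ᵥ ℓ)⁻¹ • ℓ, by
    rw [dotProduct_smul, smul_eq_mul, inv_mul_cancel₀ (dotProduct_self_eq_zero.not.2 hℓ)]⟩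
  set p := Q *ᵥ u with hp
  have hpp : p ⬝ᵥ h *ᵥ p = u ⬝ᵥ (Q * h * Q) *ᵥ u := by
    rw [← dotProduct_transpose_mul_mul_mulVec, hQ.eq]
  have hℓp : ℓ ⬝ᵥ h *ᵥ p = 0 := by
    rw [hh.dotProduct_mulVec_comm, hp, ← vecMul_transpose, ← dotProduct_mulVec, hQ.eq, hQℓ,
      dotProduct_zero]
  have hℓu : vecMulVec ℓ ℓ *ᵥ u = ℓ := by rw [vecMulVec_mulVec, hu, MulOpposite.op_one, one_smul]
  rcases hSℓ with hSℓ | hSℓ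
  · have hQp : Q *ᵥ (h *ᵥ p) = ℓ := by rw [mulVec_mulVec, mulVec_mulVec, ← hℓu, hSℓ]
    rw [hSℓ, hℓu, dotProduct_comm u, hu] at hpp
    obtain ⟨β, hβ⟩ :=
      eq_add_smul_vecMulVec_of_mul_mul_self_eq hind hh hQ hℓ hℓℓ hpp hℓp hSℓ hQℓ hQp
    exact isNullSymOuter_of_eq_add_smul hh hℓ hℓℓ hpp hℓp hβ
  · -- `QhQ = -ℓℓᵀ` would make `p` timelike and orthogonal to the null vector `ℓ`.
    rw [hSℓ, neg_mulVec, hℓu, dotProduct_neg, dotProduct_comm u, hu] at hpp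
    exact absurd (hind.eq_zero_of_dotProduct_eq_zero (by rw [hpp]; norm_num)
      (by rwa [hh.dotProduct_mulVec_comm]) hℓℓ.le) hℓ

theorem zero_or_isSignedNullSquare_or_isNullSymOuter {N : ℕ} {h Q : Matrix (Fin N) (Fin N) ℝ}
    (hind : NegIndexLeOne h) (hh : h.IsSymm) (hQ : Q.IsSymm) (hQ3 : Q * h * Q * h * Q = 0) :
    (Q = 0 ∧ ¬IsSignedNullSquare h Q ∧ ¬IsNullSymOuter h Q) ∨
      (Q ≠ 0 ∧ IsSignedNullSquare h Q ∧ ¬IsNullSymOuter h Q) ∨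
      (Q ≠ 0 ∧ ¬IsSignedNullSquare h Q ∧ IsNullSymOuter h Q) := by
  by_cases hQ0 : Q = 0
  · subst hQ0
    exact Or.inl ⟨rfl, fun H => H.ne_zero rfl, fun H => H.mul_mul_self_ne_zero hh (by simp)⟩
  by_cases hS : Q * h * Q = 0
  · exact Or.inr <| Or.inl
      ⟨hQ0, hQ.isSignedNullSquare hind hQ0 hS, fun H => H.mul_mul_self_ne_zero hh hS⟩
  · exact Or.inr <| Or.inr ⟨hQ0, fun H => hS H.mul_mul_self_eq_zero,
      isNullSymOuter_of_mul_mul_self_ne_zero hind hh hQ hQ3 hS⟩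

/-- **Corollary B.4** (`cor:pnform`): for a Lorentz-signature metric `g` (i.e. `g` is
symmetric and congruent to `diag(1,…,1,−1)`) and a symmetric matrix `Q` with `g⁻¹Q`
nilpotent (vanishing zeroth-order invariants), exactly one of the following holds:
(i) `Q = 0`; (ii) `Q = ±ℓℓᵀ` with `ℓ ≠ 0` null; (iii) `Q = (ℓmᵀ + mℓᵀ)/2` with
`ℓ ≠ 0` null and `m` a unit spacelike covector orthogonal to `ℓ`. -/
theorem pn_form_lorentz (N : ℕ) (g Q : Matrix (Fin N) (Fin N) ℝ)
    (hgsymm : g.IsSymm)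
    (hsig : ∃ P : Matrix (Fin N) (Fin N) ℝ, IsUnit P.det ∧ Pᵀ * g * P = minkDiag N)
    (hQsymm : Q.IsSymm) (hnil : IsNilpotent (g⁻¹ * Q)) :
    ((Q = 0) ∧
      ¬(∃ l : Fin N → ℝ, l ≠ 0 ∧ l ⬝ᵥ g⁻¹ *ᵥ l = 0 ∧
          (Q = vecMulVec l l ∨ Q = -vecMulVec l l)) ∧
      ¬(∃ l m : Fin N → ℝ, l ≠ 0 ∧ l ⬝ᵥ g⁻¹ *ᵥ l = 0 ∧ m ⬝ᵥ g⁻¹ *ᵥ m = 1 ∧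
          l ⬝ᵥ g⁻¹ *ᵥ m = 0 ∧ Q = symOuter l m)) ∨
    (¬(Q = 0) ∧
      (∃ l : Fin N → ℝ, l ≠ 0 ∧ l ⬝ᵥ g⁻¹ *ᵥ l = 0 ∧
          (Q = vecMulVec l l ∨ Q = -vecMulVec l l)) ∧
      ¬(∃ l m : Fin N → ℝ, l ≠ 0 ∧ l ⬝ᵥ g⁻¹ *ᵥ l = 0 ∧ m ⬝ᵥ g⁻¹ *ᵥ m = 1 ∧
          l ⬝ᵥ g⁻¹ *ᵥ m = 0 ∧ Q = symOuter l m)) ∨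
    (¬(Q = 0) ∧
      ¬(∃ l : Fin N → ℝ, l ≠ 0 ∧ l ⬝ᵥ g⁻¹ *ᵥ l = 0 ∧
          (Q = vecMulVec l l ∨ Q = -vecMulVec l l)) ∧
      (∃ l m : Fin N → ℝ, l ≠ 0 ∧ l ⬝ᵥ g⁻¹ *ᵥ l = 0 ∧ m ⬝ᵥ g⁻¹ *ᵥ m = 1 ∧
          l ⬝ᵥ g⁻¹ *ᵥ m = 0 ∧ Q = symOuter l m)) := by
  obtain ⟨P, hP, hPg⟩ := hsig
  have hginv : P * minkDiag N * Pᵀ * g = 1 :=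
    mul_mul_transpose_mul_eq_one hP (minkDiag_mul_self N) hPg
  have hind : NegIndexLeOne g⁻¹ := by
    rw [inv_eq_left_inv hginv]
    simpa using (negIndexLeOne_minkDiag N).transpose_mul_mul (isUnit_det_transpose P hP)
  have hnil' : IsNilpotent (Q * g⁻¹) := by
    simpa [transpose_mul, hQsymm.eq, hgsymm.inv.eq] using isNilpotent_transpose_iff.2 hnil
  have hQ3 : Q * g⁻¹ * Q * g⁻¹ * Q = 0 := calc
    Q * g⁻¹ * Q * g⁻¹ * Q = (Q * g⁻¹) ^ 3 * g := by
      simp [pow_three, Matrix.mul_assoc, nonsing_inv_mul g (isUnit_det_of_left_inverse hginv)]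
    _ = 0 := by
      rw [pow_three_eq_zero_of_isNilpotent hind hgsymm.inv hQsymm hnil', Matrix.zero_mul]
  exact zero_or_isSignedNullSquare_or_isNullSymOuter hind hgsymm.inv hQsymm hQ3
end

section
/- Let g and Q be symmetric real N×N matrices admitting a Petrov normal form: there exist r ≥ 1, block sizes d_1,…,d_r ≥ 1 with Σ d_λ = N, signs σ_λ ∈ {+1,−1}, and a basis {k^{λ,ν} : 1 ≤ λ ≤ r, 1 ≤ ν ≤ d_λ} of ℝ^N with g = Σ_{λ,ν} σ_λ k^{λ,ν} ⊙ k^{λ,d_λ+1−ν} and Q = Σ_{λ : d_λ>1} Σ_{ν=1}^{d_λ−1} σ_λ k^{λ,ν+1} ⊙ k^{λ,d_λ+1−ν}. Set σ_o = Σ_{λ : d_λ odd} σ_λ and σ_e = Σ_{λ : d_λ even} σ_λ. Then the quadratic form of g is nondegenerate with signature ((N+σ_o)/2 positive squares, (N−σ_o)/2 negative squares), and the quadratic form of Q has rank N−r with signature ((N−r+σ_e)/2 positive squares, (N−r−σ_e)/2 negative squares). -/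
open Matrix

/-!
In the basis `k`, both forms are *pairing matrices*: each basis index `a` is paired with a
partner `τ a` by an involution `τ` and carries a weight `w a`, equal to `σ_λ` or `0`. For `g`
the partner of `ν` is `d_λ + 1 - ν`; for `Q` it is `d_λ + 2 - ν`, and `k^{λ,1}` has no partner
(weight `0`). Such a matrix is diagonalised by an orthogonal change of basis: a fixed point
`a = τ a` stays put and contributes `w a`, while a two-cycle `{a, τ a}` spans a hyperbolic plane,
with basis `(k_a ± k_{τ a})/√2`, contributing `+w a` and `-w a`. Hence the rank is the number of
nonzero weights and the signature is the sum of the weights over the fixed points, i.e. over the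
middle vectors of the odd blocks for `g` and of the even blocks for `Q`.
-/

open Finset Function

namespace Matrix

variable {n m R : Type*} [Fintype n] [DecidableEq n] [Fintype m] [DecidableEq m] [CommRing R]

def IsCongr (A B : Matrix n n R) : Prop :=
  ∃ P : Matrix n n R, IsUnit P.det ∧ Pᵀ * A * P = B

theorem IsCongr.trans {A B C : Matrix n n R} (hAB : IsCongr A B) (hBC : IsCongr B C) :
    IsCongr A C := by
  obtain ⟨P, hP, rfl⟩ := hAB
  obtain ⟨P', hP', rfl⟩ := hBC
  refine ⟨P * P', by simpa only [det_mul] using hP.mul hP', ?_⟩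
  simp only [transpose_mul, Matrix.mul_assoc]

theorem IsCongr.submatrix {A B : Matrix n n R} (h : IsCongr A B) (e : m ≃ n) :
    IsCongr (A.submatrix e e) (B.submatrix e e) := by
  obtain ⟨P, hP, rfl⟩ := h
  refine ⟨P.submatrix e e, by rwa [det_submatrix_equiv_self], ?_⟩
  rw [transpose_submatrix, submatrix_mul_equiv, submatrix_mul_equiv]

theorem isCongr_mul_mul_transpose {K : Matrix n n R} (hK : IsUnit K.det) (A : Matrix n n R) :
    IsCongr (K * A * Kᵀ) A := by
  refine ⟨K⁻¹ᵀ, by rwa [det_transpose, isUnit_nonsing_inv_det_iff], ?_⟩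
  rw [transpose_transpose, transpose_nonsing_inv, Matrix.mul_assoc K,
    nonsing_inv_mul_cancel_left _ _ hK, mul_nonsing_inv_cancel_right _ _ (by rwa [det_transpose])]

end Matrix

structure IsPairSign {ι : Type*} (τ : ι → ι) (t : ι → ℝ) : Prop where
  eq_one_or_eq_neg_one : ∀ a, t a = 1 ∨ t a = -1
  eq_one_of_fixed : ∀ a, τ a = a → t a = 1
  apply_of_ne : ∀ a, τ a ≠ a → t (τ a) = -t a

def pairingMatrix {ι : Type*} [DecidableEq ι] (τ : ι → ι) (w : ι → ℝ) :
    Matrix ι ι ℝ :=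
  of fun a b => if b = τ a then w a else 0

/-- For a pair sign `t` and a `τ`-invariant `w`, the columns are orthonormal eigenvectors of
`pairingMatrix τ w`, with eigenvalues `t * w`. -/
noncomputable def pairingDiagonalizer {ι : Type*} [DecidableEq ι] (τ : ι → ι)
    (t : ι → ℝ) : Matrix ι ι ℝ :=
  of fun x a => if τ a = a then (if x = a then 1 else 0)
    else ((if x = a then t a else 0) + (if x = τ a then 1 else 0)) / √2

section Pairing

variable {ι : Type*} [Fintype ι] {τ : ι → ι} {t w : ι → ℝ}

theorem Function.Involutive.exists_isPairSign (hτ : Involutive τ) : ∃ t, IsPairSign τ t := by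
  let o := Fintype.equivFin ι
  refine ⟨fun a => if o a ≤ o (τ a) then 1 else -1,
    ⟨fun a => by split_ifs <;> simp, fun a ha => by simp [ha], fun a ha => ?_⟩⟩
  have hne : o a ≠ o (τ a) := fun h => ha (o.injective h).symm
  simp only [hτ a]
  rcases hne.lt_or_gt with h | h
  · simp [h.le, not_le.2 h]
  · simp [h.le, not_le.2 h]

theorem sum_smul_symOuter_eq_sum_smul_vecMulVec {N : ℕ} (hτ : Involutive τ)
    (hw : ∀ a, w (τ a) = w a) (k : ι → Fin N → ℝ) :
    ∑ a, w a • symOuter (k a) (k (τ a)) = ∑ a, w a • vecMulVec (k a) (k (τ a)) := by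
  have hswap := Equiv.sum_comp (hτ.toPerm τ) fun a => w a • vecMulVec (k a) (k (τ a))
  simp only [Involutive.coe_toPerm, hw, hτ _] at hswap
  simp only [symOuter, smul_add, smul_comm (w _) (1 / 2 : ℝ), ← smul_sum, sum_add_distrib,
    hswap]
  rw [← two_smul ℝ, smul_smul]
  norm_num

variable [DecidableEq ι]

theorem IsPairSign.sum_mul_eq_sum_fixed (ht : IsPairSign τ t) (hτ : Involutive τ)
    (hw : ∀ a, w (τ a) = w a) : ∑ a, t a * w a = ∑ a with τ a = a, w a := by
  rw [← sum_filter_add_sum_filter_not univ fun a => τ a = a]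
  have hfixed : ∑ a with τ a = a, t a * w a = ∑ a with τ a = a, w a :=
    sum_congr rfl fun a ha => by rw [ht.eq_one_of_fixed a (mem_filter.1 ha).2, one_mul]
  have hmoved : ∑ a with ¬τ a = a, t a * w a = 0 := by
    refine sum_involution (fun a _ => τ a) (fun a ha => ?_) (fun a ha _ => (mem_filter.1 ha).2)
      (fun a ha => ?_) (fun a _ => hτ a)
    · rw [ht.apply_of_ne a (mem_filter.1 ha).2, hw]; ring
    · simpa [hτ a] using Ne.symm (mem_filter.1 ha).2
  rw [hfixed, hmoved, add_zero]

theorem transpose_mul_pairingMatrix_mul {N : ℕ} (k : ι → Fin N → ℝ) (w : ι → ℝ) :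
    (of k)ᵀ * pairingMatrix τ w * of k = ∑ a, w a • vecMulVec (k a) (k (τ a)) := by
  ext i j
  simp only [mul_apply, pairingMatrix, of_apply, transpose_apply, Matrix.sum_apply,
    Matrix.smul_apply, vecMulVec_apply, smul_eq_mul, mul_ite, mul_zero, sum_mul, ite_mul, zero_mul]
  rw [sum_comm]
  simp only [sum_ite_eq', mem_univ, if_true]
  exact sum_congr rfl fun a _ => by ring

theorem sum_pairingDiagonalizer_mul (a : ι) (f : ι → ℝ) :
    ∑ x, pairingDiagonalizer τ t x a * f x =
      if τ a = a then f a else (t a * f a + f (τ a)) / √2 := by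
  simp only [pairingDiagonalizer, of_apply]
  split_ifs
  · simp
  · simp only [div_mul_eq_mul_div, ← sum_div, add_mul, sum_add_distrib, ite_mul, zero_mul,
      one_mul, sum_ite_eq', mem_univ, if_true]

theorem pairingDiagonalizer_transpose_mul_self (hτ : Involutive τ) (ht : IsPairSign τ t) :
    (pairingDiagonalizer τ t)ᵀ * pairingDiagonalizer τ t = 1 := by
  ext a b
  simp only [mul_apply, transpose_apply, sum_pairingDiagonalizer_mul]
  by_cases hab : a = b
  · subst hab
    by_cases ha : τ a = a
    · simp [pairingDiagonalizer, ha]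
    · have h2 : √2 * √2 = 2 := Real.mul_self_sqrt (by norm_num)
      rcases ht.eq_one_or_eq_neg_one a with h | h <;>
        simp [pairingDiagonalizer, ha, Ne.symm ha, h] <;> field_simp <;> linarith
  by_cases hb : τ a = b
  · subst hb
    have ha : τ a ≠ a := fun h => hab h.symm
    simp [pairingDiagonalizer, ha, Ne.symm ha, hτ a, ht.apply_of_ne a ha]
    ring
  · have hb' : a ≠ τ b := fun h => hb (by rw [h, hτ b])
    have hab' : τ a ≠ τ b := fun h => hab (hτ.injective h)
    simp [pairingDiagonalizer, hab, hb, hb', hab', one_apply]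

theorem pairingMatrix_mul_pairingDiagonalizer (hτ : Involutive τ) (ht : IsPairSign τ t)
    (hw : ∀ a, w (τ a) = w a) :
    pairingMatrix τ w * pairingDiagonalizer τ t =
      pairingDiagonalizer τ t * diagonal (t * w) := by
  ext y b
  rw [mul_diagonal, mul_apply]
  simp only [pairingMatrix, of_apply, ite_mul, zero_mul, sum_ite_eq', mem_univ, if_true,
    Pi.mul_apply]
  by_cases hb : τ b = b
  · by_cases hy : y = b
    · subst hy; simp [pairingDiagonalizer, hb, ht.eq_one_of_fixed y hb]
    · simp [pairingDiagonalizer, hb, hy, hτ.eq_iff]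
  by_cases hy : y = b
  · subst hy
    rcases ht.eq_one_or_eq_neg_one y with h | h <;>
      simp [pairingDiagonalizer, hb, Ne.symm hb, h] <;> ring
  by_cases hy' : y = τ b
  · subst hy'
    simp [pairingDiagonalizer, hb, Ne.symm hb, hτ b, hw]
    ring
  · simp [pairingDiagonalizer, hy, hy', hτ.eq_iff, hτ b]

theorem isCongr_pairingMatrix_diagonal (hτ : Involutive τ) (ht : IsPairSign τ t)
    (hw : ∀ a, w (τ a) = w a) : IsCongr (pairingMatrix τ w) (diagonal (t * w)) := by
  have hC := pairingDiagonalizer_transpose_mul_self hτ ht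
  refine ⟨pairingDiagonalizer τ t, isUnit_det_of_left_inverse hC, ?_⟩
  rw [Matrix.mul_assoc, pairingMatrix_mul_pairingDiagonalizer hτ ht hw, ← Matrix.mul_assoc, hC,
    Matrix.one_mul]

end Pairing

section SignCount

variable {α β : Type*} [Fintype α] [Fintype β]

theorem card_eq_one_add_card_eq_neg_one {f : α → ℝ}
    (hf : ∀ a, f a = 1 ∨ f a = -1 ∨ f a = 0) :
    #{a | f a = 1} + #{a | f a = -1} = #{a | f a ≠ 0} := by
  simp only [card_filter, ← sum_add_distrib]
  refine sum_congr rfl fun a _ => ?_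
  rcases hf a with h | h | h <;> norm_num [h]

theorem two_mul_card_eq_one {f : α → ℝ} (hf : ∀ a, f a = 1 ∨ f a = -1 ∨ f a = 0) :
    (2 * #{a | f a = 1} : ℝ) = #{a | f a ≠ 0} + ∑ a, f a := by
  have hsum : ∑ a, f a = ∑ a, ((if f a = 1 then 1 else 0) - (if f a = -1 then 1 else 0)) :=
    sum_congr rfl fun a _ => by rcases hf a with h | h | h <;> norm_num [h]
  rw [hsum, sum_sub_distrib, sum_boole, sum_boole, ← card_eq_one_add_card_eq_neg_one hf]
  push_cast
  ring

theorem card_fiber_eq_of_card_eq {f : α → ℝ} {g : β → ℝ}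
    (hf : ∀ a, f a = 1 ∨ f a = -1 ∨ f a = 0)
    (hg : ∀ b, g b = 1 ∨ g b = -1 ∨ g b = 0) (hαβ : Fintype.card α = Fintype.card β)
    (h1 : #{a | f a = 1} = #{b | g b = 1}) (h2 : #{a | f a = -1} = #{b | g b = -1}) (c : ℝ) :
    #{a | f a = c} = #{b | g b = c} := by
  by_cases hc : c = 1 ∨ c = -1 ∨ c = 0
  · rcases hc with rfl | rfl | rfl
    · exact h1
    · exact h2
    have hf0 := card_filter_add_card_filter_not (s := univ) fun a => f a = 0
    have hg0 := card_filter_add_card_filter_not (s := univ) fun b => g b = 0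
    have := card_eq_one_add_card_eq_neg_one hf
    have := card_eq_one_add_card_eq_neg_one hg
    simp only [card_univ, ne_eq] at *
    omega
  · have hf' (a : α) : f a ≠ c := by rcases hf a with h | h | h <;> grind
    have hg' (b : β) : g b ≠ c := by rcases hg b with h | h | h <;> grind
    simp [hf', hg']

end SignCount

noncomputable def signPattern {N : ℕ} (pos neg : ℕ) (i : Fin N) : ℝ :=
  if (i : ℕ) < pos then 1 else if (i : ℕ) < pos + neg then -1 else 0

section SignPattern

variable {N pos neg : ℕ}

theorem signPattern_eq_one_or_eq_neg_one_or_eq_zero (i : Fin N) :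
    signPattern pos neg i = 1 ∨ signPattern pos neg i = -1 ∨ signPattern pos neg i = 0 := by
  unfold signPattern
  split_ifs <;> simp

theorem card_signPattern_eq_one (h : pos + neg ≤ N) :
    #{i : Fin N | signPattern pos neg i = 1} = pos := by
  calc #{i : Fin N | signPattern pos neg i = 1} = #{i : Fin N | (i : ℕ) < pos} := by
        congr 1
        refine filter_congr fun i _ => ?_
        unfold signPattern
        split_ifs <;> norm_num <;> omega
    _ = pos := by rw [Fin.card_filter_val_lt]; omega

theorem card_signPattern_eq_neg_one (h : pos + neg ≤ N) :
    #{i : Fin N | signPattern pos neg i = -1} = neg := by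
  have hsub : ({i | (i : ℕ) < pos} : Finset (Fin N)) ⊆
      ({i | (i : ℕ) < pos + neg} : Finset (Fin N)) :=
    monotone_filter_right _ fun i _ hi => by omega
  calc #{i : Fin N | signPattern pos neg i = -1}
      = #(({i | (i : ℕ) < pos + neg} : Finset (Fin N)) \
          ({i | (i : ℕ) < pos} : Finset (Fin N))) := by
        congr 1
        ext i
        simp only [mem_filter, mem_sdiff, mem_univ, true_and]
        unfold signPattern
        split_ifs <;> norm_num <;> omega
    _ = neg := by
        rw [card_sdiff_of_subset hsub, Fin.card_filter_val_lt, Fin.card_filter_val_lt]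
        omega

theorem exists_equiv_comp_eq_signPattern {α : Type*} [Fintype α] (hN : Fintype.card α = N)
    {f : α → ℝ} (hf : ∀ a, f a = 1 ∨ f a = -1 ∨ f a = 0) :
    ∃ e : Fin N ≃ α, f ∘ e = signPattern #{a | f a = 1} #{a | f a = -1} := by
  have hle : #{a | f a = 1} + #{a | f a = -1} ≤ N := by
    rw [card_eq_one_add_card_eq_neg_one hf, ← hN]
    exact card_filter_le _ _
  have hfiber (c : ℝ) :
      Fintype.card {i : Fin N // signPattern #{a | f a = 1} #{a | f a = -1} i = c} =
        Fintype.card {a // f a = c} := by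
    simp only [Fintype.card_subtype]
    exact card_fiber_eq_of_card_eq signPattern_eq_one_or_eq_neg_one_or_eq_zero hf (by simp [hN])
      (card_signPattern_eq_one hle) (card_signPattern_eq_neg_one hle) c
  exact ⟨Equiv.ofFiberEquiv fun c => Fintype.equivOfCardEq (hfiber c),
    funext fun i => Equiv.ofFiberEquiv_map _ i⟩

end SignPattern

theorem exists_isCongr_signPattern {ι : Type*} [Fintype ι] [DecidableEq ι] {N : ℕ}
    {k : ι → Fin N → ℝ} (hk : LinearIndependent ℝ k) (hN : Fintype.card ι = N)
    {τ : ι → ι} (hτ : Involutive τ) {w : ι → ℝ} (hwτ : ∀ a, w (τ a) = w a)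
    (hw : ∀ a, w a = 1 ∨ w a = -1 ∨ w a = 0) :
    ∃ pos neg : ℕ,
      IsCongr (∑ a, w a • symOuter (k a) (k (τ a))) (diagonal (signPattern pos neg)) ∧
      pos + neg = #{a | w a ≠ 0} ∧
      (2 * pos : ℝ) = #{a | w a ≠ 0} + ∑ a with τ a = a, w a ∧
      (2 * neg : ℝ) = #{a | w a ≠ 0} - ∑ a with τ a = a, w a := by
  obtain ⟨t, ht⟩ := hτ.exists_isPairSign
  have hε (a : ι) : (t * w) a = 1 ∨ (t * w) a = -1 ∨ (t * w) a = 0 := by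
    rcases ht.eq_one_or_eq_neg_one a with h | h <;> rcases hw a with h' | h' | h' <;> simp [h, h']
  have hne : #{a | (t * w) a ≠ 0} = #{a | w a ≠ 0} := by
    congr 1
    refine filter_congr fun a _ => ?_
    rcases ht.eq_one_or_eq_neg_one a with h | h <;> simp [h]
  have hsum : ∑ a, (t * w) a = ∑ a with τ a = a, w a := ht.sum_mul_eq_sum_fixed hτ hwτ
  have hpn := card_eq_one_add_card_eq_neg_one hε
  have hpos := two_mul_card_eq_one hε
  obtain ⟨e, he⟩ := exists_equiv_comp_eq_signPattern hN hε
  refine ⟨_, _, ?_, hne ▸ hpn, hne ▸ hsum ▸ hpos, ?_⟩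
  · set K := (of k)ᵀ.submatrix id e
    have hK : IsUnit K.det := by
      rw [← isUnit_iff_isUnit_det, ← linearIndependent_cols_iff_isUnit]
      exact hk.comp e e.injective
    have hM : ∑ a, w a • symOuter (k a) (k (τ a)) =
        K * (pairingMatrix τ w).submatrix e e * Kᵀ := by
      rw [sum_smul_symOuter_eq_sum_smul_vecMulVec hτ hwτ, ← transpose_mul_pairingMatrix_mul,
        transpose_submatrix, submatrix_mul_equiv, submatrix_mul_equiv, transpose_transpose,
        submatrix_id_id]
    rw [hM, ← he, ← submatrix_diagonal_equiv]
    exact (isCongr_mul_mul_transpose hK _).trans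
      ((isCongr_pairingMatrix_diagonal hτ ht hwτ).submatrix e)
  · rw [← hne, ← hsum]
    have hpn' : ((#{a | (t * w) a = 1} + #{a | (t * w) a = -1} : ℕ) : ℝ) =
        #{a | (t * w) a ≠ 0} := by
      rw [hpn]
    push_cast at hpn'
    linarith

theorem symOuter_comm {N : ℕ} (x y : Fin N → ℝ) : symOuter x y = symOuter y x := by
  rw [symOuter, symOuter, add_comm]

namespace Fin

theorem val_neg_eq_ite {d : ℕ} (u : Fin d) :
    ((-u : Fin d) : ℕ) = if (u : ℕ) = 0 then 0 else d - u := by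
  rw [Fin.val_neg']
  split_ifs with h
  · rw [h, Nat.sub_zero, Nat.mod_self]
  · exact Nat.mod_eq_of_lt (by omega)

theorem val_neg_eq_zero_iff {d : ℕ} (u : Fin d) : ((-u : Fin d) : ℕ) = 0 ↔ (u : ℕ) = 0 := by
  rw [val_neg_eq_ite]
  split_ifs <;> omega

theorem sum_ite_val_eq {M : Type*} [AddCommMonoid M] (d m : ℕ) (c : M) :
    ∑ u : Fin d, (if (u : ℕ) = m then c else 0) = if m < d then c else 0 := by
  split_ifs with h
  · calc _ = ∑ u : Fin d, (if u = ⟨m, h⟩ then c else 0) :=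
          sum_congr rfl fun u _ => by simp [Fin.ext_iff]
      _ = c := by simp
  · exact sum_eq_zero fun u _ => if_neg (by omega)

theorem sum_ite_rev_eq_self {M : Type*} [AddCommMonoid M] (d : ℕ) (c : M) :
    ∑ u : Fin d, (if u.rev = u then c else 0) = if d % 2 = 1 then c else 0 := by
  calc _ = ∑ u : Fin d, (if (u : ℕ) = d / 2 then (if d % 2 = 1 then c else 0) else 0) :=
        sum_congr rfl fun u _ => by
          simp only [Fin.ext_iff, Fin.val_rev]
          split_ifs <;> first | rfl | omega
    _ = _ := by rw [sum_ite_val_eq]; split_ifs <;> first | rfl | omega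

theorem sum_ite_neg_eq_self {M : Type*} [AddCommMonoid M] {d : ℕ} (hd : 0 < d) (c : M) :
    ∑ u : Fin d, (if -u = u then (if (u : ℕ) = 0 then 0 else c) else 0) =
      if d % 2 = 0 then c else 0 := by
  calc _ = ∑ u : Fin d, (if (u : ℕ) = d / 2 then (if d % 2 = 0 then c else 0) else 0) :=
        sum_congr rfl fun u _ => by
          simp only [Fin.ext_iff, val_neg_eq_ite]
          split_ifs <;> first | rfl | omega
    _ = _ := by rw [sum_ite_val_eq]; split_ifs <;> first | rfl | omega

end Fin

theorem sum_dite_symOuter_succ_rev {N d : ℕ} (k : Fin d → Fin N → ℝ) (c : ℝ) :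
    ∑ ν : Fin d,
        (if h : (ν : ℕ) + 1 < d then c • symOuter (k ⟨ν + 1, h⟩) (k ν.rev) else 0) =
      ∑ u : Fin d, (if (u : ℕ) = 0 then 0 else c) • symOuter (k u) (k (-u)) := by
  rw [← Equiv.sum_comp Fin.revPerm]
  refine sum_congr rfl fun u _ => ?_
  simp only [Fin.revPerm_apply, Fin.rev_rev]
  have hu := u.2
  split_ifs with h h'
  · simp only [Fin.val_rev] at h; omega
  · rw [symOuter_comm]
    congr 3
    ext
    rw [Fin.val_neg_eq_ite, if_neg h']
    simp only [Fin.val_rev]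
    omega
  · simp
  · simp only [Fin.val_rev] at h; omega

section Sigma

variable {r : ℕ} {d : Fin r → ℕ}

theorem card_filter_sigma_ite_val_ne_zero (hd : ∀ l, 0 < d l) {σ : Fin r → ℝ}
    (hσ : ∀ l, σ l ≠ 0) :
    #{x : Σ l, Fin (d l) | (if (x.2 : ℕ) = 0 then 0 else σ x.1) ≠ 0} =
      Fintype.card (Σ l, Fin (d l)) - r := by
  have h0 : #{x : Σ l, Fin (d l) | (x.2 : ℕ) = 0} = r := by
    rw [card_filter, Fintype.sum_sigma]
    simp only [Fin.sum_ite_val_eq, hd, if_true, sum_const, card_univ, Fintype.card_fin,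
      smul_eq_mul, mul_one]
  have hsplit :=
    card_filter_add_card_filter_not (s := univ) fun x : Σ l, Fin (d l) => (x.2 : ℕ) = 0
  have hfilter : #{x : Σ l, Fin (d l) | (if (x.2 : ℕ) = 0 then 0 else σ x.1) ≠ 0} =
      #{x : Σ l, Fin (d l) | ¬(x.2 : ℕ) = 0} := by
    congr 1
    refine filter_congr fun x _ => ?_
    split_ifs with h <;> simp [h, hσ]
  rw [h0, card_univ] at hsplit
  omega

theorem sum_fixedPoints_sigma_rev (σ : Fin r → ℝ) :
    ∑ x with (⟨x.1, x.2.rev⟩ : Σ l, Fin (d l)) = x, σ x.1 =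
      ∑ l with d l % 2 = 1, σ l := by
  rw [sum_filter, sum_filter, Fintype.sum_sigma]
  simp [Fin.sum_ite_rev_eq_self]

theorem sum_fixedPoints_sigma_neg (hd : ∀ l, 0 < d l) (σ : Fin r → ℝ) :
    ∑ x with (⟨x.1, -x.2⟩ : Σ l, Fin (d l)) = x, (if (x.2 : ℕ) = 0 then 0 else σ x.1) =
      ∑ l with d l % 2 = 0, σ l := by
  rw [sum_filter, sum_filter, Fintype.sum_sigma]
  simp [Fin.sum_ite_neg_eq_self (hd _)]

end Sigma

theorem petrov_signatures_general (N : ℕ) (g Q : Matrix (Fin N) (Fin N) ℝ)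
    (r : ℕ) (d : Fin r → ℕ) (hd : ∀ l, 1 ≤ d l) (hsum : (∑ l, d l) = N)
    (σ : Fin r → ℝ) (hσ : ∀ l, σ l = 1 ∨ σ l = -1)
    (k : (Σ l : Fin r, Fin (d l)) → (Fin N → ℝ))
    (hli : LinearIndependent ℝ k)
    (hg : g = (∑ l : Fin r, ∑ ν : Fin (d l), σ l • symOuter (k ⟨l, ν⟩) (k ⟨l, ν.rev⟩)))
    (hQ : Q = (∑ l : Fin r, ∑ ν : Fin (d l),
            if h : (ν : ℕ) + 1 < d l then
              σ l • symOuter (k ⟨l, ⟨(ν : ℕ) + 1, h⟩⟩) (k ⟨l, ν.rev⟩)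
            else 0)) :
    (∃ (P : Matrix (Fin N) (Fin N) ℝ) (pos neg : ℕ), IsUnit P.det ∧
        pos + neg = N ∧
        (2 * pos : ℝ) = N + (∑ l ∈ Finset.univ.filter (fun l => d l % 2 = 1), σ l) ∧
        (2 * neg : ℝ) = N - (∑ l ∈ Finset.univ.filter (fun l => d l % 2 = 1), σ l) ∧
        Pᵀ * g * P = Matrix.diagonal (fun i : Fin N => if (i : ℕ) < pos then 1 else -1)) ∧
    (∃ (P : Matrix (Fin N) (Fin N) ℝ) (pos neg : ℕ), IsUnit P.det ∧
        pos + neg = N - r ∧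
        (2 * pos : ℝ) = (N - r : ℕ) + (∑ l ∈ Finset.univ.filter (fun l => d l % 2 = 0), σ l) ∧
        (2 * neg : ℝ) = (N - r : ℕ) - (∑ l ∈ Finset.univ.filter (fun l => d l % 2 = 0), σ l) ∧
        Pᵀ * Q * P = Matrix.diagonal (fun i : Fin N =>
          if (i : ℕ) < pos then 1 else if (i : ℕ) < pos + neg then -1 else 0)) := by
  have hcard : Fintype.card (Σ l, Fin (d l)) = N := by simp [hsum]
  have hσ0 (l : Fin r) : σ l ≠ 0 := by rcases hσ l with h | h <;> simp [h]
  constructor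
  · obtain ⟨pos, neg, ⟨P, hP, hPg⟩, hpn, hpos, hneg⟩ :=
      exists_isCongr_signPattern hli hcard (τ := fun x => ⟨x.1, x.2.rev⟩) (fun x => by simp)
        (w := fun x => σ x.1) (fun _ => rfl) (fun x => by rcases hσ x.1 with h | h <;> simp [h])
    rw [filter_true_of_mem fun x _ => hσ0 x.1, card_univ, hcard] at hpn hpos hneg
    rw [sum_fixedPoints_sigma_rev] at hpos hneg
    have hpattern : signPattern pos neg = fun i : Fin N => if (i : ℕ) < pos then 1 else -1 :=
      funext fun i => by have := i.2; unfold signPattern; split_ifs <;> first | rfl | omega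
    rw [Fintype.sum_sigma, hpattern] at hPg
    exact ⟨P, pos, neg, hP, hpn, hpos, hneg, hg ▸ hPg⟩
  · -- `Q` pairs `u ≠ 0` in `Fin (d l)` with `-u = d l - u`; `u = 0` is unpaired, of weight `0`.
    obtain ⟨pos, neg, ⟨P, hP, hPQ⟩, hpn, hpos, hneg⟩ :=
      exists_isCongr_signPattern hli hcard (τ := fun x => ⟨x.1, -x.2⟩) (fun x => by simp)
        (w := fun x => if (x.2 : ℕ) = 0 then 0 else σ x.1)
        (fun x => by simp [Fin.val_neg_eq_zero_iff])
        (fun x => by rcases hσ x.1 with h | h <;> split_ifs <;> simp [h])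
    rw [card_filter_sigma_ite_val_ne_zero hd hσ0, hcard] at hpn hpos hneg
    rw [sum_fixedPoints_sigma_neg hd] at hpos hneg
    rw [Fintype.sum_sigma] at hPQ
    refine ⟨P, pos, neg, hP, hpn, hpos, hneg, ?_⟩
    rwa [hQ, funext fun l => sum_dite_symOuter_succ_rev (fun u => k ⟨l, u⟩) (σ l)]

/-- **Proposition B.5** (`prop:vsig`): if symmetric matrices `g`, `Q` admit a Petrov
normal form with block sizes `d_λ` and block signatures `σ_λ = ±1`, then (by Sylvester's
law of inertia, signatures expressed via congruence to signed diagonal matrices) `g` is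
nondegenerate of signature `((N+σ_o)/2, (N−σ_o)/2)` where `σ_o = Σ_{d_λ odd} σ_λ`, and
`Q` has rank `N − r` and signature `((N−r+σ_e)/2, (N−r−σ_e)/2)` where
`σ_e = Σ_{d_λ even} σ_λ`. -/
theorem petrov_signatures (N : ℕ) (g Q : Matrix (Fin N) (Fin N) ℝ)
    (r : ℕ) (hr : 1 ≤ r) (d : Fin r → ℕ) (hd : ∀ l, 1 ≤ d l) (hsum : (∑ l, d l) = N)
    (σ : Fin r → ℝ) (hσ : ∀ l, σ l = 1 ∨ σ l = -1)
    (k : (Σ l : Fin r, Fin (d l)) → (Fin N → ℝ))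
    (hli : LinearIndependent ℝ k) (hspan : Submodule.span ℝ (Set.range k) = ⊤)
    (hg : g = (∑ l : Fin r, ∑ ν : Fin (d l), σ l • symOuter (k ⟨l, ν⟩) (k ⟨l, ν.rev⟩)))
    (hQ : Q = (∑ l : Fin r, ∑ ν : Fin (d l),
            if h : (ν : ℕ) + 1 < d l then
              σ l • symOuter (k ⟨l, ⟨(ν : ℕ) + 1, h⟩⟩) (k ⟨l, ν.rev⟩)
            else 0)) :
    (∃ (P : Matrix (Fin N) (Fin N) ℝ) (pos neg : ℕ), IsUnit P.det ∧
        pos + neg = N ∧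
        (2 * pos : ℝ) = N + (∑ l ∈ Finset.univ.filter (fun l => d l % 2 = 1), σ l) ∧
        (2 * neg : ℝ) = N - (∑ l ∈ Finset.univ.filter (fun l => d l % 2 = 1), σ l) ∧
        Pᵀ * g * P = Matrix.diagonal (fun i : Fin N => if (i : ℕ) < pos then 1 else -1)) ∧
    (∃ (P : Matrix (Fin N) (Fin N) ℝ) (pos neg : ℕ), IsUnit P.det ∧
        pos + neg = N - r ∧
        (2 * pos : ℝ) = (N - r : ℕ) + (∑ l ∈ Finset.univ.filter (fun l => d l % 2 = 0), σ l) ∧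
        (2 * neg : ℝ) = (N - r : ℕ) - (∑ l ∈ Finset.univ.filter (fun l => d l % 2 = 0), σ l) ∧
        Pᵀ * Q * P = Matrix.diagonal (fun i : Fin N =>
          if (i : ℕ) < pos then 1 else if (i : ℕ) < pos + neg then -1 else 0)) :=
  petrov_signatures_general N g Q r d hd hsum σ hσ k hli hg hQ
end

section
/- Let T be a bilinear form on ℝ^N of pure boost weight zero with respect to a null frame, i.e. its only possibly nonzero null-frame components are T_{01}, T_{10} and T_{ij} (spatial i, j). If the two scalar invariants T^{(2)}_{ac} T^{(2)ac} and T_{ab} T^{ba} both vanish, where T^{(2)}_{ac} = T_{ab} T_c{}^{b} and indices are raised with η, then T = 0. (Contrapositive: a nonzero rank-2 tensor of pure boost weight zero possesses a non-vanishing scalar invariant.) -/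
open Matrix

/-! Null-frame formalism: we work with the components of tensors with respect to a
null frame `e_0 = ℓ, e_1 = n, e_2 = m_2, …, e_{N−1} = m_{N−1}` for the Minkowski
form `η` on `ℝ^N` (so `η(ℓ,n) = 1`, `η(m_i,m_j) = δ_{ij}`, all other frame products
vanish).  `ηnf N` is the matrix of frame components `η_{AB}`, and `ηup N = (ηnf N)⁻¹`
is the matrix of the inverse-metric components `η^{AB}` used to raise indices.
Spatial indices are those `i : Fin N` with `2 ≤ i`. -/

/-- Frame components `η_{AB}` of the Minkowski form in a null frame. -/
def ηnf (N : ℕ) : Matrix (Fin N) (Fin N) ℝ :=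
  Matrix.of fun A B =>
    if ((A : ℕ) = 0 ∧ (B : ℕ) = 1) ∨ ((A : ℕ) = 1 ∧ (B : ℕ) = 0) then 1
    else if A = B ∧ 2 ≤ (A : ℕ) then 1 else 0

/-- Components `η^{AB}` of the inverse metric in a null frame. -/
noncomputable def ηup (N : ℕ) : Matrix (Fin N) (Fin N) ℝ := (ηnf N)⁻¹

/-- The boost weight of a null-frame index: `+1` for the index `0` (the `ℓ` slot),
`−1` for the index `1` (the `n` slot), `0` for spatial indices. -/
def bw {N : ℕ} (A : Fin N) : ℤ :=
  if (A : ℕ) = 0 then 1 else if (A : ℕ) = 1 then -1 else 0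


/-- The square of a rank-2 tensor with one index raised:
`T⁽²⁾_{ac} = T_{ab} T_c{}^b = T_{ab} η^{bb'} T_{cb'}`. -/
noncomputable def sq2 (N : ℕ) (T : Fin N → Fin N → ℝ) : Fin N → Fin N → ℝ :=
  fun a c => ∑ b, ∑ b', T a b * ηup N b b' * T c b'

/-! In a null frame `η` is the permutation matrix of the swap `σ : ℓ ↔ n`, so contracting
with `η` just relabels `0 ↔ 1`. For `T` of pure boost weight zero, `S = T⁽²⁾` is symmetric
and again of pure boost weight zero, which forces `S_{σa σc} = S_{ac}`; the first invariant
is therefore `∑ S_{ac}²`, so `S = 0`. For spatial `i`, `S_{ii} = ∑_b T_{ib}²`, so the spatial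
rows of `T` vanish, and then the second invariant is `T_{01}² + T_{10}²`. -/

theorem eq_zero_of_sum_sum_mul_self_eq_zero {ι κ : Type*} [Fintype ι] [Fintype κ]
    {f : ι → κ → ℝ} (h : ∑ i, ∑ j, f i j * f i j = 0) (i : ι) (j : κ) : f i j = 0 := by
  rw [← Fintype.sum_prod_type', Finset.sum_mul_self_eq_zero_iff] at h
  exact h (i, j) (Finset.mem_univ _)

def PureBoostWeightZero {N : ℕ} (T : Fin N → Fin N → ℝ) : Prop :=
  ∀ a b, bw a + bw b ≠ 0 → T a b = 0

section NullFrame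

variable {N : ℕ}

def nullSwap (hN : 2 ≤ N) : Equiv.Perm (Fin N) := Equiv.swap ⟨0, by omega⟩ ⟨1, hN⟩

theorem nullSwap_val (hN : 2 ≤ N) (a : Fin N) : (nullSwap hN a : ℕ) =
    if (a : ℕ) = 0 then 1 else if (a : ℕ) = 1 then 0 else (a : ℕ) := by
  simp only [nullSwap, Equiv.swap_apply_def, Fin.ext_iff]
  split_ifs <;> rfl

@[simp]
theorem nullSwap_nullSwap (hN : 2 ≤ N) (a : Fin N) : nullSwap hN (nullSwap hN a) = a :=
  Equiv.swap_apply_self _ _ _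

theorem bw_nullSwap (hN : 2 ≤ N) (a : Fin N) : bw (nullSwap hN a) = -bw a := by
  simp only [bw, nullSwap_val]
  split_ifs <;> omega

theorem nullSwap_eq_self_of_bw_eq_zero (hN : 2 ≤ N) {a : Fin N} (ha : bw a = 0) :
    nullSwap hN a = a := by
  simp only [bw] at ha
  ext
  rw [nullSwap_val]
  split_ifs at ha ⊢ <;> omega

theorem bw_eq_zero_or_eq_nullSwap_of_bw_add_eq_zero (hN : 2 ≤ N) {a c : Fin N}
    (h : bw a + bw c = 0) : (bw a = 0 ∧ bw c = 0) ∨ c = nullSwap hN a := by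
  simp only [bw, Fin.ext_iff, nullSwap_val] at h ⊢
  split_ifs at h ⊢ <;> omega

theorem ηnf_apply (hN : 2 ≤ N) (a b : Fin N) :
    ηnf N a b = if b = nullSwap hN a then 1 else 0 := by
  simp only [ηnf, Matrix.of_apply, Fin.ext_iff, nullSwap_val]
  split_ifs <;> first | rfl | omega

theorem ηnf_eq_permMatrix (hN : 2 ≤ N) : ηnf N = (nullSwap hN).permMatrix ℝ := by
  ext a b
  simp [ηnf_apply hN, Equiv.Perm.permMatrix, PEquiv.toMatrix_apply, eq_comm]

theorem ηup_eq_ηnf (hN : 2 ≤ N) : ηup N = ηnf N := by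
  refine Matrix.inv_eq_right_inv ?_
  rw [ηnf_eq_permMatrix hN, ← Matrix.permMatrix_mul, nullSwap, Equiv.swap_mul_self,
    Matrix.permMatrix_one]

theorem sum_mul_ηup_mul (hN : 2 ≤ N) (x : ℝ) (f : Fin N → ℝ) (a : Fin N) :
    ∑ a', x * ηup N a a' * f a' = x * f (nullSwap hN a) := by
  simp [ηup_eq_ηnf hN, ηnf_apply hN]

theorem sum_sum_mul_ηup_mul_ηup_mul (hN : 2 ≤ N) (X Y : Fin N → Fin N → ℝ) (a b : Fin N) :
    ∑ a', ∑ b', X a b * ηup N a a' * ηup N b b' * Y a' b' =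
      X a b * Y (nullSwap hN a) (nullSwap hN b) := by
  simp [ηup_eq_ηnf hN, ηnf_apply hN]

theorem sq2_eq_sum (hN : 2 ≤ N) (T : Fin N → Fin N → ℝ) (a c : Fin N) :
    sq2 N T a c = ∑ b, T a b * T c (nullSwap hN b) := by
  simp only [sq2, sum_mul_ηup_mul hN]

theorem sq2_comm (hN : 2 ≤ N) (T : Fin N → Fin N → ℝ) (a c : Fin N) :
    sq2 N T a c = sq2 N T c a := by
  rw [sq2_eq_sum hN, sq2_eq_sum hN, ← Equiv.sum_comp (nullSwap hN)]
  simp only [nullSwap_nullSwap, mul_comm]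

theorem pureBoostWeightZero_sq2 (hN : 2 ≤ N) {T : Fin N → Fin N → ℝ}
    (hT : PureBoostWeightZero T) : PureBoostWeightZero (sq2 N T) := by
  intro a c hac
  rw [sq2_eq_sum hN]
  refine Finset.sum_eq_zero fun b _ => ?_
  by_cases hab : bw a + bw b = 0
  · refine mul_eq_zero_of_right _ (hT c _ ?_)
    rw [bw_nullSwap]
    omega
  · exact mul_eq_zero_of_left (hT a b hab) _

theorem PureBoostWeightZero.sq2_self_eq_sum_mul_self (hN : 2 ≤ N) {T : Fin N → Fin N → ℝ}
    (hT : PureBoostWeightZero T) {a : Fin N} (ha : bw a = 0) :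
    sq2 N T a a = ∑ b, T a b * T a b := by
  rw [sq2_eq_sum hN]
  refine Finset.sum_congr rfl fun b _ => ?_
  by_cases hb : bw b = 0
  · rw [nullSwap_eq_self_of_bw_eq_zero hN hb]
  · rw [hT a b (by omega), zero_mul, zero_mul]

theorem PureBoostWeightZero.apply_nullSwap_nullSwap (hN : 2 ≤ N) {S : Fin N → Fin N → ℝ}
    (hS : PureBoostWeightZero S) (hS_comm : ∀ a c, S a c = S c a) (a c : Fin N) :
    S (nullSwap hN a) (nullSwap hN c) = S a c := by
  by_cases h : bw a + bw c = 0
  · rcases bw_eq_zero_or_eq_nullSwap_of_bw_add_eq_zero hN h with ⟨ha, hc⟩ | rfl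
    · rw [nullSwap_eq_self_of_bw_eq_zero hN ha, nullSwap_eq_self_of_bw_eq_zero hN hc]
    · rw [nullSwap_nullSwap, hS_comm]
  · rw [hS a c h, hS _ _ (by rw [bw_nullSwap, bw_nullSwap]; omega)]

theorem PureBoostWeightZero.mul_apply_nullSwap_nullSwap (hN : 2 ≤ N) {T : Fin N → Fin N → ℝ}
    (hT : PureBoostWeightZero T) (hrow : ∀ a, bw a = 0 → ∀ b, T a b = 0) (a b : Fin N) :
    T a b * T (nullSwap hN b) (nullSwap hN a) = T a b * T a b := by
  by_cases h : bw a + bw b = 0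
  · rcases bw_eq_zero_or_eq_nullSwap_of_bw_add_eq_zero hN h with ⟨ha, -⟩ | rfl
    · rw [hrow a ha, zero_mul, zero_mul]
    · rw [nullSwap_nullSwap]
  · rw [hT a b h, zero_mul, zero_mul]

end NullFrame

/-- **Lemma 12** (`lemmapureb0`): a bilinear form `T` on `ℝ^N` of pure boost weight zero
with respect to a null frame (only `T_{01}`, `T_{10}`, `T_{ij}` possibly nonzero, i.e.
all components of nonzero boost weight vanish) whose scalar invariants
`T⁽²⁾_{ac} T⁽²⁾ᵃᶜ` and `T_{ab} Tᵇᵃ` both vanish must be zero.  (Contrapositive: a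
nonzero rank-2 tensor of pure boost weight zero has a non-vanishing invariant.) -/
theorem rank2_pure_bw_zero_vsi (N : ℕ) (hN : 2 ≤ N)
    (T : Fin N → Fin N → ℝ)
    (hbw : ∀ a b : Fin N, bw a + bw b ≠ 0 → T a b = 0)
    (h1 : (∑ a, ∑ c, ∑ a', ∑ c',
      sq2 N T a c * ηup N a a' * ηup N c c' * sq2 N T a' c') = 0)
    (h2 : (∑ a, ∑ b, ∑ a', ∑ b',
      T a b * ηup N a a' * ηup N b b' * T b' a') = 0) :
    ∀ a b, T a b = 0 := by
  have hT : PureBoostWeightZero T := hbw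
  have hsq2 : ∀ a c, sq2 N T a c = 0 := by
    refine eq_zero_of_sum_sum_mul_self_eq_zero ?_
    simpa only [sum_sum_mul_ηup_mul_ηup_mul hN,
      (pureBoostWeightZero_sq2 hN hT).apply_nullSwap_nullSwap hN (sq2_comm hN T)] using h1
  have hrow : ∀ a, bw a = 0 → ∀ b, T a b = 0 := by
    intro a ha b
    have hsum : ∑ b, T a b * T a b = 0 := by
      rw [← hT.sq2_self_eq_sum_mul_self hN ha, hsq2]
    exact (Finset.sum_mul_self_eq_zero_iff _ _).1 hsum b (Finset.mem_univ b)
  refine eq_zero_of_sum_sum_mul_self_eq_zero ?_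
  simpa only [sum_sum_mul_ηup_mul_ηup_mul hN, hT.mul_apply_nullSwap_nullSwap hN hrow] using h2
end

section
/- Let T be a trilinear form on ℝ^N of pure boost weight zero with respect to a null frame, i.e. its only possibly nonzero null-frame components are T_{01i}, T_{10i}, T_{0i1}, T_{1i0}, T_{i01}, T_{i10} and T_{ijk} (spatial i, j, k). Define the four bilinear forms S¹_{ad} = T_{abc} T_d{}^{cb}, S²_{cd} = T_{abc} T^{a}{}_d{}^{b}, S³_{ad} = T_{abc} T^{b}{}_d{}^{c}, S⁴_{cd} = T_{abc} T_d{}^{ba} (indices raised with η). Suppose that for each k = 1,2,3,4 the scalar invariants S^k_{ab} S^{k\,ba} and S^{k(2)}_{ac} S^{k(2)ac} vanish (where S^{k(2)}_{ac} = S^k_{ab} S^k{}_c{}^{b}), and that T_{abc} T^{abc} = 0. Then T = 0. (Contrapositive: a nonzero rank-3 tensor of pure boost weight zero possesses a non-vanishing scalar invariant.) -/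
open Matrix

/-- `S¹_{ad} = T_{abc} T_d{}^{cb}` (indices raised with `η`). -/
noncomputable def S1 (N : ℕ) (T : Fin N → Fin N → Fin N → ℝ) : Fin N → Fin N → ℝ :=
  fun a d => ∑ b, ∑ c, ∑ b', ∑ c', T a b c * ηup N b b' * ηup N c c' * T d c' b'

/-- `S²_{cd} = T_{abc} T^{a}{}_d{}^{b}`. -/
noncomputable def S2 (N : ℕ) (T : Fin N → Fin N → Fin N → ℝ) : Fin N → Fin N → ℝ :=
  fun c d => ∑ a, ∑ b, ∑ a', ∑ b', T a b c * ηup N a a' * ηup N b b' * T a' d b'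

/-- `S³_{ad} = T_{abc} T^{b}{}_d{}^{c}`. -/
noncomputable def S3 (N : ℕ) (T : Fin N → Fin N → Fin N → ℝ) : Fin N → Fin N → ℝ :=
  fun a d => ∑ b, ∑ c, ∑ b', ∑ c', T a b c * ηup N b b' * ηup N c c' * T b' d c'

/-- `S⁴_{cd} = T_{abc} T_d{}^{ba}`. -/
noncomputable def S4 (N : ℕ) (T : Fin N → Fin N → Fin N → ℝ) : Fin N → Fin N → ℝ :=
  fun c d => ∑ a, ∑ b, ∑ a', ∑ b', T a b c * ηup N a a' * ηup N b b' * T d b' a'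

/-- The scalar invariant `S_{ab} Sᵇᵃ` of a rank-2 tensor `S`. -/
noncomputable def invTr (N : ℕ) (S : Fin N → Fin N → ℝ) : ℝ :=
  ∑ a, ∑ b, ∑ a', ∑ b', S a b * ηup N a a' * ηup N b b' * S b' a'

/-- The scalar invariant `S⁽²⁾_{ac} S⁽²⁾ᵃᶜ` of a rank-2 tensor `S`,
where `S⁽²⁾_{ac} = S_{ab} S_c{}^b`. -/
noncomputable def invSq (N : ℕ) (S : Fin N → Fin N → ℝ) : ℝ :=
  ∑ a, ∑ c, ∑ a', ∑ c', sq2 N S a c * ηup N a a' * ηup N c c' * sq2 N S a' c'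

/-! In the null frame `η^{ab}` is the permutation matrix of the swap `0 ↔ 1`, so every
contraction becomes a plain sum in which raising an index swaps `ℓ` and `n`. For a rank-2
tensor of boost weight zero, `S⁽²⁾_{ac} S⁽²⁾ᵃᶜ = 2 (S_{01} S_{10})² + ∑_{ij} (∑_k S_{ik} S_{jk})²`,
so its vanishing kills the spatial block, and then `S_{ab} Sᵇᵃ = S_{01}² + S_{10}²` kills the
rest. Hence `S¹ = ⋯ = S⁴ = 0`; their `01` and `10` components are seven quadratic relations
between the six spatial vectors `T_{01i}, …, T_{i10}` which force all of them to vanish.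
Finally `T_{abc} Tᵃᵇᶜ` reduces to `∑ T_{ijk}²`. -/

open Finset

-- Reducible, so that `simp` can use such a hypothesis as a conditional rewrite rule whose side
-- condition on boost weights it decides once the indices are `0`, `1` or spatial.
abbrev IsBoostWeightZero₃ {N : ℕ} (T : Fin N → Fin N → Fin N → ℝ) : Prop :=
  ∀ a b c, bw a + bw b + bw c ≠ 0 → T a b c = 0

abbrev IsBoostWeightZero₂ {N : ℕ} (S : Fin N → Fin N → ℝ) : Prop :=
  ∀ a b, bw a + bw b ≠ 0 → S a b = 0

/-- The invariant `T_{abc} Tᵃᵇᶜ`. -/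
noncomputable def selfContraction₃ (N : ℕ) (T : Fin N → Fin N → Fin N → ℝ) : ℝ :=
  ∑ a, ∑ b, ∑ c, ∑ a', ∑ b', ∑ c',
    T a b c * ηup N a a' * ηup N b b' * ηup N c c' * T a' b' c'

theorem eq_zero_of_dotProduct_relations {ι R : Type*} [Fintype ι] [CommRing R] [LinearOrder R]
    [IsStrictOrderedRing R] {A B C D E F : ι → R}
    (h₁ : A ⬝ᵥ D + C ⬝ᵥ B = 0) (h₂ : D ⬝ᵥ A + F ⬝ᵥ F = 0) (h₃ : C ⬝ᵥ B + E ⬝ᵥ E = 0)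
    (h₄ : A ⬝ᵥ A + C ⬝ᵥ F = 0) (h₅ : B ⬝ᵥ B + D ⬝ᵥ E = 0)
    (h₆ : D ⬝ᵥ D + F ⬝ᵥ B = 0) (h₇ : C ⬝ᵥ C + E ⬝ᵥ A = 0) :
    A = 0 ∧ B = 0 ∧ C = 0 ∧ D = 0 ∧ E = 0 ∧ F = 0 := by
  have hnonneg (v : ι → R) : 0 ≤ v ⬝ᵥ v := sum_nonneg fun i _ => mul_self_nonneg (v i)
  -- `h₂ + h₃ - h₁` reads `E ⬝ᵥ E + F ⬝ᵥ F = 0`.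
  have hE : E = 0 :=
    dotProduct_self_eq_zero.1 (by linarith [hnonneg E, hnonneg F, dotProduct_comm A D])
  have hF : F = 0 :=
    dotProduct_self_eq_zero.1 (by linarith [hnonneg E, hnonneg F, dotProduct_comm A D])
  subst hE hF
  simp only [dotProduct_zero, zero_dotProduct, add_zero, dotProduct_self_eq_zero] at h₄ h₅ h₆ h₇
  exact ⟨h₄, h₅, h₇, h₆, rfl, rfl⟩

section NullFrame

variable {n : ℕ}

@[simp] lemma bw_zero : bw (0 : Fin (n + 2)) = 1 := by simp [bw]

@[simp] lemma bw_one : bw (1 : Fin (n + 2)) = -1 := by simp [bw]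

@[simp] lemma bw_succ_succ (i : Fin n) : bw i.succ.succ = 0 := by simp [bw]

@[simp] lemma swap_zero_one_succ_succ (i : Fin n) :
    Equiv.swap (0 : Fin (n + 2)) 1 i.succ.succ = i.succ.succ :=
  Equiv.swap_apply_of_ne_of_ne (Fin.succ_ne_zero _) (Fin.succ_succ_ne_one i)

lemma bw_swap_zero_one (a : Fin (n + 2)) : bw (Equiv.swap 0 1 a) = -bw a := by
  refine Fin.cases ?_ (Fin.cases ?_ fun i => ?_) a <;> simp

lemma ηnf_eq_permMatrix_s10 :
    ηnf (n + 2) = (Equiv.swap 0 1 : Equiv.Perm (Fin (n + 2))).permMatrix ℝ := by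
  ext a b
  refine Fin.cases ?_ (Fin.cases ?_ fun i => ?_) a <;>
    refine Fin.cases ?_ (Fin.cases ?_ fun j => ?_) b <;>
    simp [ηnf, Equiv.Perm.permMatrix, PEquiv.toMatrix_apply, Fin.succ_inj,
      (Fin.succ_succ_ne_one _).symm, (Fin.succ_ne_zero _).symm]

lemma ηup_eq_ηnf_s10 : ηup (n + 2) = ηnf (n + 2) := by
  refine Matrix.inv_eq_left_inv ?_
  rw [ηnf_eq_permMatrix_s10, ← permMatrix_mul, Equiv.swap_mul_self, permMatrix_one]

lemma ηup_apply (a b : Fin (n + 2)) :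
    ηup (n + 2) a b = if Equiv.swap 0 1 a = b then 1 else 0 := by
  simp [ηup_eq_ηnf_s10, ηnf_eq_permMatrix_s10, Equiv.Perm.permMatrix, PEquiv.toMatrix_apply]

lemma sq2_apply (S : Fin (n + 2) → Fin (n + 2) → ℝ) (a c : Fin (n + 2)) :
    sq2 (n + 2) S a c = ∑ b, S a b * S c (Equiv.swap 0 1 b) := by
  simp [sq2, ηup_apply, ite_mul, mul_ite]

lemma invTr_apply (S : Fin (n + 2) → Fin (n + 2) → ℝ) :
    invTr (n + 2) S = ∑ a, ∑ b, S a b * S (Equiv.swap 0 1 b) (Equiv.swap 0 1 a) := by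
  simp [invTr, ηup_apply, ite_mul, mul_ite]

lemma invSq_apply (S : Fin (n + 2) → Fin (n + 2) → ℝ) :
    invSq (n + 2) S =
      ∑ a, ∑ c, sq2 (n + 2) S a c * sq2 (n + 2) S (Equiv.swap 0 1 a) (Equiv.swap 0 1 c) := by
  simp [invSq, ηup_apply, ite_mul, mul_ite]

variable (T : Fin (n + 2) → Fin (n + 2) → Fin (n + 2) → ℝ)

lemma S1_apply (a d : Fin (n + 2)) :
    S1 (n + 2) T a d = ∑ b, ∑ c, T a b c * T d (Equiv.swap 0 1 c) (Equiv.swap 0 1 b) := by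
  simp [S1, ηup_apply, ite_mul, mul_ite]

lemma S2_apply (c d : Fin (n + 2)) :
    S2 (n + 2) T c d = ∑ a, ∑ b, T a b c * T (Equiv.swap 0 1 a) d (Equiv.swap 0 1 b) := by
  simp [S2, ηup_apply, ite_mul, mul_ite]

lemma S3_apply (a d : Fin (n + 2)) :
    S3 (n + 2) T a d = ∑ b, ∑ c, T a b c * T (Equiv.swap 0 1 b) d (Equiv.swap 0 1 c) := by
  simp [S3, ηup_apply, ite_mul, mul_ite]

lemma S4_apply (c d : Fin (n + 2)) :
    S4 (n + 2) T c d = ∑ a, ∑ b, T a b c * T d (Equiv.swap 0 1 b) (Equiv.swap 0 1 a) := by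
  simp [S4, ηup_apply, ite_mul, mul_ite]

lemma selfContraction₃_apply :
    selfContraction₃ (n + 2) T = ∑ a, ∑ b, ∑ c,
      T a b c * T (Equiv.swap 0 1 a) (Equiv.swap 0 1 b) (Equiv.swap 0 1 c) := by
  simp [selfContraction₃, ηup_apply, ite_mul, mul_ite]

end NullFrame

section BoostWeightZero

variable {n : ℕ}

section Rank2

variable {S : Fin (n + 2) → Fin (n + 2) → ℝ}

lemma invTr_eq_of_isBoostWeightZero₂ (hS : IsBoostWeightZero₂ S) :
    invTr (n + 2) S = S 0 1 * S 0 1 + S 1 0 * S 1 0 +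
      ∑ i : Fin n, ∑ j : Fin n, S i.succ.succ j.succ.succ * S j.succ.succ i.succ.succ := by
  simp [invTr_apply, Fin.sum_univ_succ, hS, add_assoc]

lemma invSq_eq_of_isBoostWeightZero₂ (hS : IsBoostWeightZero₂ S) :
    invSq (n + 2) S = 2 * (S 0 1 * S 1 0) ^ 2 +
      ∑ i : Fin n, ∑ j : Fin n,
        (∑ k : Fin n, S i.succ.succ k.succ.succ * S j.succ.succ k.succ.succ) ^ 2 := by
  simp only [invSq_apply, sq2_apply, Fin.sum_univ_succ, Equiv.swap_apply_left,
    Fin.succ_zero_eq_one, Equiv.swap_apply_right, swap_zero_one_succ_succ, bw_zero, Int.reduceAdd,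
    ne_eq, OfNat.ofNat_ne_zero, not_false_eq_true, hS, mul_zero, bw_succ_succ, add_zero,
    one_ne_zero, sum_const_zero, bw_one, Int.reduceNeg, neg_eq_zero, zero_add, zero_mul, ← sq,
    zero_pow]
  ring

theorem eq_zero_of_invTr_eq_zero_of_invSq_eq_zero (hS : IsBoostWeightZero₂ S)
    (htr : invTr (n + 2) S = 0) (hsq : invSq (n + 2) S = 0) : S = 0 := by
  rw [invSq_eq_of_isBoostWeightZero₂ hS] at hsq
  have hgram := ((add_eq_zero_iff_of_nonneg (by positivity) (by positivity)).1 hsq).2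
  have hspatial (i k : Fin n) : S i.succ.succ k.succ.succ = 0 := by
    have hrow := (sum_eq_zero_iff_of_nonneg fun i _ => by positivity).1 hgram i (mem_univ i)
    have hdiag := (sum_eq_zero_iff_of_nonneg fun j _ => by positivity).1 hrow i (mem_univ i)
    exact (sum_mul_self_eq_zero_iff _ _).1 (pow_eq_zero_iff two_ne_zero |>.1 hdiag) k (mem_univ k)
  simp only [invTr_eq_of_isBoostWeightZero₂ hS, hspatial, mul_zero, sum_const_zero,
    add_zero, mul_self_add_mul_self_eq_zero] at htr
  ext a b
  refine Fin.cases ?_ (Fin.cases ?_ fun i => ?_) a <;>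
    refine Fin.cases ?_ (Fin.cases ?_ fun j => ?_) b <;>
    simp [hS, htr, hspatial]

end Rank2

abbrev MixedComponentsVanish (T : Fin (n + 2) → Fin (n + 2) → Fin (n + 2) → ℝ) : Prop :=
  ∀ i : Fin n, T 0 1 i.succ.succ = 0 ∧ T 1 0 i.succ.succ = 0 ∧ T 0 i.succ.succ 1 = 0 ∧
    T 1 i.succ.succ 0 = 0 ∧ T i.succ.succ 0 1 = 0 ∧ T i.succ.succ 1 0 = 0

variable {T : Fin (n + 2) → Fin (n + 2) → Fin (n + 2) → ℝ}

lemma mul_eq_zero_of_bw_ne (hT : IsBoostWeightZero₃ T) {a b c a' b' c' : Fin (n + 2)}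
    (h : bw a + bw b + bw c + (bw a' + bw b' + bw c') ≠ 0) : T a b c * T a' b' c' = 0 := by
  by_cases h₀ : bw a + bw b + bw c = 0
  · rw [hT a' b' c' (by omega), mul_zero]
  · rw [hT a b c h₀, zero_mul]

lemma isBoostWeightZero₂_S1 (hT : IsBoostWeightZero₃ T) :
    IsBoostWeightZero₂ (S1 (n + 2) T) := fun a d h => by
  rw [S1_apply]
  exact sum_eq_zero fun b _ => sum_eq_zero fun c _ =>
    mul_eq_zero_of_bw_ne hT (by simp only [bw_swap_zero_one]; omega)

lemma isBoostWeightZero₂_S2 (hT : IsBoostWeightZero₃ T) :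
    IsBoostWeightZero₂ (S2 (n + 2) T) := fun c d h => by
  rw [S2_apply]
  exact sum_eq_zero fun a _ => sum_eq_zero fun b _ =>
    mul_eq_zero_of_bw_ne hT (by simp only [bw_swap_zero_one]; omega)

lemma isBoostWeightZero₂_S3 (hT : IsBoostWeightZero₃ T) :
    IsBoostWeightZero₂ (S3 (n + 2) T) := fun a d h => by
  rw [S3_apply]
  exact sum_eq_zero fun b _ => sum_eq_zero fun c _ =>
    mul_eq_zero_of_bw_ne hT (by simp only [bw_swap_zero_one]; omega)

lemma isBoostWeightZero₂_S4 (hT : IsBoostWeightZero₃ T) :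
    IsBoostWeightZero₂ (S4 (n + 2) T) := fun c d h => by
  rw [S4_apply]
  exact sum_eq_zero fun a _ => sum_eq_zero fun b _ =>
    mul_eq_zero_of_bw_ne hT (by simp only [bw_swap_zero_one]; omega)

theorem mixedComponentsVanish_of_S_eq_zero (hT : IsBoostWeightZero₃ T)
    (h₁ : S1 (n + 2) T = 0) (h₂ : S2 (n + 2) T = 0) (h₃ : S3 (n + 2) T = 0)
    (h₄ : S4 (n + 2) T = 0) : MixedComponentsVanish T := by
  obtain ⟨hA, hB, hC, hD, hE, hF⟩ := eq_zero_of_dotProduct_relations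
    (A := fun i : Fin n => T 0 1 i.succ.succ) (B := fun i => T 1 0 i.succ.succ)
    (C := fun i => T 0 i.succ.succ 1) (D := fun i => T 1 i.succ.succ 0)
    (E := fun i => T i.succ.succ 0 1) (F := fun i => T i.succ.succ 1 0)
    (by simpa [S1_apply, Fin.sum_univ_succ, hT, dotProduct] using congr_fun₂ h₁ 0 1)
    (by simpa [S2_apply, Fin.sum_univ_succ, hT, dotProduct] using congr_fun₂ h₂ 0 1)
    (by simpa [S2_apply, Fin.sum_univ_succ, hT, dotProduct] using congr_fun₂ h₂ 1 0)
    (by simpa [S3_apply, Fin.sum_univ_succ, hT, dotProduct] using congr_fun₂ h₃ 0 1)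
    (by simpa [S3_apply, Fin.sum_univ_succ, hT, dotProduct] using congr_fun₂ h₃ 1 0)
    (by simpa [S4_apply, Fin.sum_univ_succ, hT, dotProduct] using congr_fun₂ h₄ 0 1)
    (by simpa [S4_apply, Fin.sum_univ_succ, hT, dotProduct] using congr_fun₂ h₄ 1 0)
  exact fun i => ⟨congr_fun hA i, congr_fun hB i, congr_fun hC i, congr_fun hD i,
    congr_fun hE i, congr_fun hF i⟩

theorem spatial_components_eq_zero (hT : IsBoostWeightZero₃ T)
    (hmixed : MixedComponentsVanish T)
    (hself : selfContraction₃ (n + 2) T = 0) (i j k : Fin n) :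
    T i.succ.succ j.succ.succ k.succ.succ = 0 := by
  have hsum :
      ∑ i : Fin n, ∑ j : Fin n, ∑ k : Fin n, T i.succ.succ j.succ.succ k.succ.succ ^ 2 = 0 := by
    simpa [selfContraction₃_apply, Fin.sum_univ_succ, hT, hmixed, ← sq] using hself
  have h₁ := (sum_eq_zero_iff_of_nonneg fun i _ => by positivity).1 hsum i (mem_univ i)
  have h₂ := (sum_eq_zero_iff_of_nonneg fun j _ => by positivity).1 h₁ j (mem_univ j)
  have h₃ := (sum_eq_zero_iff_of_nonneg fun k _ => by positivity).1 h₂ k (mem_univ k)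
  exact pow_eq_zero_iff two_ne_zero |>.1 h₃

theorem eq_zero_of_mixed_of_spatial (hT : IsBoostWeightZero₃ T)
    (hmixed : MixedComponentsVanish T)
    (hspatial : ∀ i j k : Fin n, T i.succ.succ j.succ.succ k.succ.succ = 0)
    (a b c : Fin (n + 2)) : T a b c = 0 := by
  refine Fin.cases ?_ (Fin.cases ?_ fun i => ?_) a <;>
    refine Fin.cases ?_ (Fin.cases ?_ fun j => ?_) b <;>
    refine Fin.cases ?_ (Fin.cases ?_ fun k => ?_) c <;>
    simp [hT, hmixed, hspatial]

end BoostWeightZero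

/-- **Lemma 14** (`lemmarank3`): a trilinear form `T` on `ℝ^N` of pure boost weight zero
with respect to a null frame (only the components `T_{01i}`, `T_{10i}`, `T_{0i1}`,
`T_{1i0}`, `T_{i01}`, `T_{i10}`, `T_{ijk}` are possibly nonzero, i.e. all components of
nonzero boost weight vanish) such that the scalar invariants `Sᵏ_{ab} Sᵏᵇᵃ` and
`Sᵏ⁽²⁾_{ac} Sᵏ⁽²⁾ᵃᶜ` of the four contractions `S¹_{ad} = T_{abc} T_d{}^{cb}`,
`S²_{cd} = T_{abc} T^{a}{}_d{}^{b}`, `S³_{ad} = T_{abc} T^{b}{}_d{}^{c}`,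
`S⁴_{cd} = T_{abc} T_d{}^{ba}` all vanish, and with `T_{abc} Tᵃᵇᶜ = 0`, must be zero.
(Contrapositive: a nonzero rank-3 tensor of pure boost weight zero possesses a
non-vanishing scalar invariant.) -/
theorem rank3_pure_bw_zero_vsi (N : ℕ) (hN : 2 ≤ N)
    (T : Fin N → Fin N → Fin N → ℝ)
    (hbw : ∀ a b c : Fin N, bw a + bw b + bw c ≠ 0 → T a b c = 0)
    (h1 : invTr N (S1 N T) = 0) (h1' : invSq N (S1 N T) = 0)
    (h2 : invTr N (S2 N T) = 0) (h2' : invSq N (S2 N T) = 0)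
    (h3 : invTr N (S3 N T) = 0) (h3' : invSq N (S3 N T) = 0)
    (h4 : invTr N (S4 N T) = 0) (h4' : invSq N (S4 N T) = 0)
    (hT : (∑ a, ∑ b, ∑ c, ∑ a', ∑ b', ∑ c',
      T a b c * ηup N a a' * ηup N b b' * ηup N c c' * T a' b' c') = 0) :
    ∀ a b c, T a b c = 0 := by
  obtain ⟨n, rfl⟩ := Nat.exists_eq_add_of_le' hN
  have hmixed := mixedComponentsVanish_of_S_eq_zero hbw
    (eq_zero_of_invTr_eq_zero_of_invSq_eq_zero (isBoostWeightZero₂_S1 hbw) h1 h1')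
    (eq_zero_of_invTr_eq_zero_of_invSq_eq_zero (isBoostWeightZero₂_S2 hbw) h2 h2')
    (eq_zero_of_invTr_eq_zero_of_invSq_eq_zero (isBoostWeightZero₂_S3 hbw) h3 h3')
    (eq_zero_of_invTr_eq_zero_of_invSq_eq_zero (isBoostWeightZero₂_S4 hbw) h4 h4')
  exact eq_zero_of_mixed_of_spatial hbw hmixed (spatial_components_eq_zero hbw hmixed hT)
end

section
/- Let 0 < p < q and let B be the symmetric bilinear form of signature (p,q) on ℝ^{p+q}. If (X_i)_{i∈I} is an arbitrary family of vectors with B(X_i, X_j) = 0 for all i, j ∈ I, then there exists T ∈ SO_{p,q} such that the transformed vectors Y_i = T X_i satisfy: for every i ∈ I, the λ-th and (λ+p)-th coordinates of Y_i coincide for each λ = 1,…,p, and every coordinate of Y_i with index greater than 2p vanishes. -/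
/-!
Write `X i = (u i, w i)` with `u i ∈ ℝ^p`, `w i ∈ ℝ^q`. That the `X i` are null and mutually
orthogonal says exactly `u i ⬝ u j = w i ⬝ w j`, so the families `w i` and `(u i, 0)` in `ℝ^q` have
the same Gram matrix and are related by a Euclidean isometry `H` of `ℝ^q`. As `p < q`, all
`(u i, 0)` vanish in coordinate `p + 1`, so composing with the reflection in that coordinate if
needed makes `det H = 1`. Then `T = 1_p ⊕ H` lies in `SO_{p,q}` and sends `X i` to `(u i, u i, 0)`.
-/

open Matrix

/-- The symmetric bilinear form of signature `(p,q)` on `ℝ^{p+q}`: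
`B(x,y) = Σ_{λ<p} x_λ y_λ − Σ_{p≤λ<p+q} x_λ y_λ`. -/
def sigForm (p q : ℕ) (x y : Fin (p + q) → ℝ) : ℝ :=
  ∑ l : Fin (p + q), (if (l : ℕ) < p then (1 : ℝ) else -1) * x l * y l

section GramMatrix

variable {𝕜 E I : Type*} [RCLike 𝕜] [NormedAddCommGroup E] [InnerProductSpace 𝕜 E]

theorem inner_linearCombination_linearCombination (v : I → E) (c d : I →₀ 𝕜) :
    inner 𝕜 (Finsupp.linearCombination 𝕜 v c) (Finsupp.linearCombination 𝕜 v d) =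
      d.sum fun j y => y * c.sum fun i x => starRingEnd 𝕜 x * gram 𝕜 v i j := by
  simp only [Finsupp.linearCombination_apply, Finsupp.sum_inner, Finsupp.inner_sum,
    inner_smul_left, inner_smul_right, gram_apply]

theorem norm_linearCombination_eq_of_gram_eq {a b : I → E} (h : gram 𝕜 a = gram 𝕜 b)
    (c : I →₀ 𝕜) :
    ‖Finsupp.linearCombination 𝕜 a c‖ = ‖Finsupp.linearCombination 𝕜 b c‖ := by
  rw [norm_eq_sqrt_re_inner (𝕜 := 𝕜), norm_eq_sqrt_re_inner (𝕜 := 𝕜),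
    inner_linearCombination_linearCombination, inner_linearCombination_linearCombination, h]

theorem exists_linearIsometry_apply_eq_of_gram_eq [FiniteDimensional 𝕜 E] {a b : I → E}
    (h : gram 𝕜 a = gram 𝕜 b) : ∃ L : E →ₗᵢ[𝕜] E, ∀ i, L (b i) = a i := by
  set Sa := Finsupp.linearCombination 𝕜 a
  set Sb := Finsupp.linearCombination 𝕜 b
  have hbdd : ∃ C, ∀ c, ‖Sa c‖ ≤ C * ‖Sb c‖ :=
    ⟨1, fun c => (one_mul ‖Sb c‖).symm ▸ (norm_linearCombination_eq_of_gram_eq h c).le⟩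
  have hφ (c : I →₀ 𝕜) : Sa.compLeftInverse Sb ⟨Sb c, c, rfl⟩ = Sa c :=
    LinearMap.compLeftInverse_apply_of_bdd Sa Sb hbdd c _ rfl
  let φ : LinearMap.range Sb →ₗᵢ[𝕜] E :=
    { toLinearMap := (Sa.compLeftInverse Sb).toLinearMap
      norm_map' := by
        rintro ⟨_, c, rfl⟩
        exact (hφ c).symm ▸ norm_linearCombination_eq_of_gram_eq h c }
  refine ⟨φ.extend, fun i => ?_⟩
  have hb : Sb (Finsupp.single i 1) = b i := by simp [Sb]
  rw [← hb]
  exact (φ.extend_apply ⟨_, _, rfl⟩).trans ((hφ _).trans (by simp [Sa]))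

end GramMatrix

section Real

variable {E I : Type*} [NormedAddCommGroup E] [InnerProductSpace ℝ E] [FiniteDimensional ℝ E]

theorem LinearIsometryEquiv.det_eq_one_or_eq_neg_one (L : E ≃ₗᵢ[ℝ] E) :
    LinearMap.det (L.toLinearEquiv : E →ₗ[ℝ] E) = 1 ∨
      LinearMap.det (L.toLinearEquiv : E →ₗ[ℝ] E) = -1 :=
  abs_eq zero_le_one |>.mp <| LinearMap.normDet_eq_abs_det (L.toLinearEquiv : E →ₗ[ℝ] E) ▸
    L.toLinearIsometry.normDet_eq_one

theorem det_reflection_orthogonal_singleton {v : E} (hv : v ≠ 0) :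
    LinearMap.det ((ℝ ∙ v)ᗮ.reflection.toLinearEquiv : E →ₗ[ℝ] E) = -1 := by
  have := (ℝ ∙ v)ᗮ.det_reflection
  rwa [Submodule.orthogonal_orthogonal, finrank_span_singleton hv, pow_one] at this

theorem exists_linearIsometryEquiv_det_eq_one_of_gram_eq {a b : I → E}
    (h : gram ℝ a = gram ℝ b) {v : E} (hv : v ≠ 0) (hva : ∀ i, inner ℝ v (a i) = 0) :
    ∃ L : E ≃ₗᵢ[ℝ] E, LinearMap.det (L.toLinearEquiv : E →ₗ[ℝ] E) = 1 ∧ ∀ i, L (b i) = a i := by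
  obtain ⟨L, hL⟩ := exists_linearIsometry_apply_eq_of_gram_eq h
  let L' := L.toLinearIsometryEquiv rfl
  rcases L'.det_eq_one_or_eq_neg_one with hdet | hdet
  · exact ⟨L', hdet, hL⟩
  refine ⟨L'.trans (ℝ ∙ v)ᗮ.reflection, ?_, fun i => ?_⟩
  · rw [LinearIsometryEquiv.toLinearEquiv_trans, LinearEquiv.coe_trans, LinearMap.det_comp, hdet,
      det_reflection_orthogonal_singleton hv, neg_one_mul, neg_neg]
  · simp [L', hL, Submodule.reflection_mem_subspace_eq_self,
      Submodule.mem_orthogonal_singleton_iff_inner_right.mpr (hva i)]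

end Real

theorem exists_mem_specialOrthogonalGroup_mulVec_eq {n I : Type*} [Fintype n] [DecidableEq n]
    {a b : I → n → ℝ} (h : ∀ i j, a i ⬝ᵥ a j = b i ⬝ᵥ b j) (k : n) (hk : ∀ i, a i k = 0) :
    ∃ H ∈ specialOrthogonalGroup n ℝ, ∀ i, H *ᵥ b i = a i := by
  let e := EuclideanSpace.basisFun n ℝ
  have hgram : gram ℝ (fun i => WithLp.toLp 2 (a i)) = gram ℝ (fun i => WithLp.toLp 2 (b i)) := by
    ext i j
    simp [gram_apply, EuclideanSpace.inner_eq_star_dotProduct, h j i]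
  obtain ⟨L, hdet, hL⟩ := exists_linearIsometryEquiv_det_eq_one_of_gram_eq hgram
    (v := EuclideanSpace.single k 1) (by simp)
    fun i => by simp [EuclideanSpace.inner_single_left, hk]
  refine ⟨LinearMap.toMatrix e.toBasis e.toBasis L.toLinearEquiv,
    mem_specialOrthogonalGroup_iff.2 ⟨L.toMatrix_mem_unitaryGroup e e, by
      rw [LinearMap.det_toMatrix, hdet]⟩, fun i => ?_⟩
  have hH : toEuclideanLin (LinearMap.toMatrix e.toBasis e.toBasis L.toLinearEquiv) =
      L.toLinearEquiv := by
    rw [toEuclideanLin_eq_toLin_orthonormal, toLin_toMatrix]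
  change WithLp.ofLp (toEuclideanLin _ (WithLp.toLp 2 (b i))) = a i
  rw [hH]
  exact congrArg WithLp.ofLp (hL i)

theorem Matrix.dotProduct_mulVec_mulVec_of_mem_orthogonalGroup {n R : Type*} [Fintype n]
    [DecidableEq n] [CommRing R] {H : Matrix n n R} (hH : H ∈ orthogonalGroup n R) (v w : n → R) :
    H *ᵥ v ⬝ᵥ H *ᵥ w = v ⬝ᵥ w := by
  rw [dotProduct_mulVec, ← mulVec_transpose, mulVec_mulVec, (mem_orthogonalGroup_iff' n R).1 hH,
    one_mulVec]

theorem Fin.append_dotProduct_append {R : Type*} [CommRing R] {m n : ℕ} (u u' : Fin m → R)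
    (w w' : Fin n → R) : Fin.append u w ⬝ᵥ Fin.append u' w' = u ⬝ᵥ u' + w ⬝ᵥ w' := by
  simp [dotProduct, Fin.sum_univ_add]

namespace Matrix

variable {R : Type*} [CommRing R] {p q : ℕ}

def fromBlocksOne (p : ℕ) (H : Matrix (Fin q) (Fin q) R) : Matrix (Fin (p + q)) (Fin (p + q)) R :=
  reindex finSumFinEquiv finSumFinEquiv (fromBlocks 1 0 0 H)

theorem det_fromBlocksOne (H : Matrix (Fin q) (Fin q) R) : (fromBlocksOne p H).det = H.det := by
  rw [fromBlocksOne, det_reindex_self, det_fromBlocks_zero₂₁, det_one, one_mul]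

theorem fromBlocksOne_mulVec_append (H : Matrix (Fin q) (Fin q) R) (u : Fin p → R)
    (w : Fin q → R) : fromBlocksOne p H *ᵥ Fin.append u w = Fin.append u (H *ᵥ w) := by
  rw [fromBlocksOne, reindex_apply, submatrix_mulVec_equiv, Equiv.symm_symm,
    show Fin.append u w ∘ finSumFinEquiv = Sum.elim u w from Fin.append_comp_sumElim,
    fromBlocks_mulVec]
  ext i
  induction i using Fin.addCases <;> simp

end Matrix

theorem sigForm_append {p q : ℕ} (u u' : Fin p → ℝ) (w w' : Fin q → ℝ) :
    sigForm p q (Fin.append u w) (Fin.append u' w') = u ⬝ᵥ u' - w ⬝ᵥ w' := by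
  simp [sigForm, Fin.sum_univ_add, dotProduct, sub_eq_add_neg]

theorem sigForm_fromBlocksOne_mulVec {p q : ℕ} {H : Matrix (Fin q) (Fin q) ℝ}
    (hH : H ∈ orthogonalGroup (Fin q) ℝ) (x y : Fin (p + q) → ℝ) :
    sigForm p q (fromBlocksOne p H *ᵥ x) (fromBlocksOne p H *ᵥ y) = sigForm p q x y := by
  rw [← Fin.append_castAdd_natAdd (f := x), ← Fin.append_castAdd_natAdd (f := y),
    fromBlocksOne_mulVec_append, fromBlocksOne_mulVec_append, sigForm_append, sigForm_append,
    dotProduct_mulVec_mulVec_of_mem_orthogonalGroup hH]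

/-- **Corollary A.3** (`cor:indefcoll`): for an arbitrary family of mutually orthogonal
null vectors `X_i` in `ℝ^{p,q}` (with `0 < p < q`) there is a `(p,q)`-isometry `T` of
determinant `1` (an element of `SO_{p,q}`) such that the transformed vectors
`Y_i = T X_i` satisfy `(Y_i)_λ = (Y_i)_{λ+p}` for `λ = 0,…,p−1` (0-based) and
`(Y_i)_μ = 0` for all coordinates with index `μ ≥ 2p` (0-based). -/
theorem normalize_orthogonal_null_collection {p q : ℕ} (hpq : p < q)
    {I : Type*} (X : I → (Fin (p + q) → ℝ))
    (hX : ∀ i j : I, sigForm p q (X i) (X j) = 0) :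
    ∃ T : Matrix (Fin (p + q)) (Fin (p + q)) ℝ, T.det = 1 ∧
      (∀ x y : Fin (p + q) → ℝ, sigForm p q (T *ᵥ x) (T *ᵥ y) = sigForm p q x y) ∧
      ∀ i : I,
        (∀ lam : ℕ, ∀ h : lam < p,
          (T *ᵥ X i) ⟨lam, by omega⟩ = (T *ᵥ X i) ⟨lam + p, by omega⟩) ∧
        (∀ mu : Fin (p + q), 2 * p ≤ (mu : ℕ) → (T *ᵥ X i) mu = 0) := by
  obtain ⟨s, rfl⟩ := Nat.exists_eq_add_of_le hpq.le
  have hs : 0 < s := by omega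
  set u : I → Fin p → ℝ := fun i => X i ∘ Fin.castAdd (p + s)
  set w : I → Fin (p + s) → ℝ := fun i => X i ∘ Fin.natAdd p
  have hXuw (i : I) : X i = Fin.append (u i) (w i) := Fin.append_castAdd_natAdd.symm
  have hGram (i j : I) :
      Fin.append (u i) (0 : Fin s → ℝ) ⬝ᵥ Fin.append (u j) (0 : Fin s → ℝ) = w i ⬝ᵥ w j := by
    rw [Fin.append_dotProduct_append, dotProduct_zero, add_zero, ← sub_eq_zero, ← sigForm_append,
      ← hXuw, ← hXuw, hX]
  obtain ⟨H, hH, hHw⟩ := exists_mem_specialOrthogonalGroup_mulVec_eq hGram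
    (Fin.natAdd p ⟨0, hs⟩) fun _ => Fin.append_right _ _ _
  rw [mem_specialOrthogonalGroup_iff] at hH
  have hTX (i : I) :
      fromBlocksOne p H *ᵥ X i = Fin.append (u i) (Fin.append (u i) (0 : Fin s → ℝ)) := by
    rw [hXuw, fromBlocksOne_mulVec_append, hHw]
  refine ⟨fromBlocksOne p H, (det_fromBlocksOne H).trans hH.2, sigForm_fromBlocksOne_mulVec hH.1,
    fun i => ⟨fun lam hlam => ?_, fun mu hmu => ?_⟩⟩
  · rw [hTX, show (⟨lam + p, _⟩ : Fin (p + (p + s))) = Fin.natAdd p (Fin.castAdd s ⟨lam, hlam⟩)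
      from Fin.ext (Nat.add_comm _ _), Fin.append_right, Fin.append_left]
    exact Fin.append_left _ _ ⟨lam, hlam⟩
  · rw [hTX]
    induction mu using Fin.addCases with
    | left l => simp only [Fin.val_castAdd] at hmu; omega
    | right j =>
      induction j using Fin.addCases with
      | left l => simp only [Fin.val_natAdd, Fin.val_castAdd] at hmu; omega
      | right k => simp
end
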